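/- arXiv:2504.12370 — 5 statements merged into one kernel-verified Lean document; each statement's English description precedes it below -/
import Mathlib

section
/- Exclusion of a collapsed ingoing null boundary segment (no 𝒮_{i⁺}): let a solution of the EMKG system be defined on [u₀,u₁]×[v₀,∞), satisfy the data hypotheses on {u₀}×[v₀,∞), and satisfy the gauge normalization lim_{v→∞}(−r∂_ur)(u,v) = 1 for every u ∈ [u₀,u₁], with v₀ sufficiently large in terms of the hypothesis constants. If a ∈ [u₀,u₁] is such that lim_{v→∞} r(u,v) = 0 for every u ∈ [a,u₁], then a = u₁; in other words, there is no ingoing null segment of positive u-length along which the area-radius extends to zero at v = ∞. -/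
noncomputable section

open Real Filter Topology

/-- Partial derivative in the `u` (first null coordinate) direction. -/
def pdu (f : ℝ × ℝ → ℝ) (p : ℝ × ℝ) : ℝ := fderiv ℝ f p (1, 0)

/-- Partial derivative in the `v` (second null coordinate) direction. -/
def pdv (f : ℝ × ℝ → ℝ) (p : ℝ × ℝ) : ℝ := fderiv ℝ f p (0, 1)

/-- Partial derivative in `u` of a complex-valued function. -/
def pduC (f : ℝ × ℝ → ℂ) (p : ℝ × ℝ) : ℂ := fderiv ℝ f p (1, 0)

/-- Partial derivative in `v` of a complex-valued function. -/
def pdvC (f : ℝ × ℝ → ℂ) (p : ℝ × ℝ) : ℂ := fderiv ℝ f p (0, 1)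

/-- A solution of the spherically symmetric Einstein–Maxwell–Klein–Gordon system in
double null coordinates, in the electromagnetic gauge `A_v ≡ 0`, on a region `R` of the
`(u,v)`-plane.  The gauge derivatives are `D_u φ = ∂_u φ + i q₀ A_u φ`, `D_v φ = ∂_v φ`. -/
structure Sol (q0 msq : ℝ) (R : Set (ℝ × ℝ)) where
  r : ℝ × ℝ → ℝ
  Om2 : ℝ × ℝ → ℝ
  Au : ℝ × ℝ → ℝ
  Qe : ℝ × ℝ → ℝ
  phi : ℝ × ℝ → ℂ
  r_pos : ∀ p ∈ R, 0 < r p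
  Om2_pos : ∀ p ∈ R, 0 < Om2 p
  smooth_r : ContDiff ℝ 3 r
  smooth_Om2 : ContDiff ℝ 3 Om2
  smooth_Au : ContDiff ℝ 3 Au
  smooth_Qe : ContDiff ℝ 3 Qe
  smooth_phi : ContDiff ℝ 3 phi
  eq_Omega : ∀ p ∈ R,
    pdu (pdv (fun q => Real.log (Om2 q))) p =
      -2 * ((pduC phi p + Complex.I * (q0 : ℂ) * (Au p : ℂ) * phi p) *
          (starRingEnd ℂ) (pdvC phi p)).re
        + Om2 p / (2 * r p ^ 2) + 2 * pdu r p * pdv r p / r p ^ 2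
        - Om2 p * Qe p ^ 2 / r p ^ 4
  eq_r : ∀ p ∈ R,
    pdu (pdv r) p =
      -Om2 p / (4 * r p) - pdu r p * pdv r p / r p
        + Om2 p * Qe p ^ 2 / (4 * r p ^ 3) + msq * r p * Om2 p * Complex.normSq (phi p) / 4
  eq_phi : ∀ p ∈ R,
    pduC (pdvC phi) p + Complex.I * (q0 : ℂ) * (Au p : ℂ) * pdvC phi p =
      -((pdv r p / r p : ℝ) : ℂ) * (pduC phi p + Complex.I * (q0 : ℂ) * (Au p : ℂ) * phi p)
        - ((pdu r p / r p : ℝ) : ℂ) * pdvC phi p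
        + Complex.I * (q0 : ℂ) * (Qe p : ℂ) * (Om2 p : ℂ) * phi p / (4 * (r p : ℂ) ^ 2)
        - (msq : ℂ) * (Om2 p : ℂ) * phi p / 4
  eq_Qu : ∀ p ∈ R,
    pdu Qe p = -q0 * r p ^ 2 *
      (phi p * (starRingEnd ℂ) (pduC phi p + Complex.I * (q0 : ℂ) * (Au p : ℂ) * phi p)).im
  eq_Qv : ∀ p ∈ R,
    pdv Qe p = q0 * r p ^ 2 * (phi p * (starRingEnd ℂ) (pdvC phi p)).im
  eq_Ray_u : ∀ p ∈ R,
    pdu (fun q => pdu r q / Om2 q) p =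
      -(r p / Om2 p) * Complex.normSq (pduC phi p + Complex.I * (q0 : ℂ) * (Au p : ℂ) * phi p)
  eq_Ray_v : ∀ p ∈ R,
    pdv (fun q => pdv r q / Om2 q) p = -(r p / Om2 p) * Complex.normSq (pdvC phi p)
  eq_Au : ∀ p ∈ R,
    pdv Au p = -Qe p * Om2 p / (2 * r p ^ 2)

/-- The gauge covariant `u`-derivative `D_u φ = ∂_u φ + i q₀ A_u φ`. -/
def Sol.DuPhi {q0 msq : ℝ} {R : Set (ℝ × ℝ)} (S : Sol q0 msq R) (p : ℝ × ℝ) : ℂ :=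
  pduC S.phi p + Complex.I * (q0 : ℂ) * (S.Au p : ℂ) * S.phi p

/-- The gauge covariant `v`-derivative `D_v φ = ∂_v φ` (gauge `A_v ≡ 0`). -/
def Sol.DvPhi {q0 msq : ℝ} {R : Set (ℝ × ℝ)} (S : Sol q0 msq R) (p : ℝ × ℝ) : ℂ :=
  pdvC S.phi p

/-- Data hypotheses on the outgoing cone `{u₀} × [v₀,∞)`. -/
structure DataHyp {q0 msq : ℝ} {R : Set (ℝ × ℝ)} (S : Sol q0 msq R)
    (u0 v0 s Lm Lp D cnu cOm COm Km : ℝ) : Prop where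
  hs : 1 / 2 < s
  hLm : 0 < Lm
  hLp : 0 < Lp
  hD : 0 < D
  hcnu : 0 < cnu
  hcOm : 0 < cOm
  hCOm : 0 < COm
  hKm : Km < 0
  nu_neg : ∀ p ∈ R, pdu S.r p < 0
  nu_data : ∀ v, v0 ≤ v → cnu ≤ -(S.r (u0, v) * pdu S.r (u0, v))
  lam_data_lo : ∀ v, v0 ≤ v → Lm * v ^ (-(2 * s)) ≤ -(S.r (u0, v) * pdv S.r (u0, v))
  lam_data_hi : ∀ v, v0 ≤ v → -(S.r (u0, v) * pdv S.r (u0, v)) ≤ Lp * v ^ (-(2 * s))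
  phi_data : ∀ v, v0 ≤ v → Complex.normSq (S.phi (u0, v)) ≤ D
  Q_data : ∀ v, v0 ≤ v → |S.Qe (u0, v)| ≤ D
  Om2_data_lo : ∀ v, v0 ≤ v → cOm * Real.exp (2 * Km * v) ≤ S.Om2 (u0, v)
  Om2_data_hi : ∀ v, v0 ≤ v → S.Om2 (u0, v) ≤ COm * Real.exp (2 * Km * v)
  rCH_pos : ∃ ρ, 0 < ρ ∧ Tendsto (fun v => S.r (u0, v)) atTop (𝓝 ρ)

/-!
Along a line `v = const`, `∂_u (r²) = 2 r ∂_u r`, so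
`r²(a,v) - r²(u₁,v) = 2 ∫_a^{u₁} (-r ∂_u r)(u,v) du`.
If `r(·,v) → 0` at both ends, the left side tends to `0` as `v → ∞`. The integrand is nonnegative
(`r > 0`, `∂_u r < 0`) and tends to `1` by the gauge normalization, so by Fatou's lemma the
right side has `liminf ≥ 2 (u₁ - a)`. Hence `a = u₁`.
-/

open MeasureTheory

theorem lintegral_ofReal_le_of_tendsto_integral {α ι : Type*} [MeasurableSpace α]
    {μ : Measure α} {l : Filter ι} [l.IsCountablyGenerated] [l.NeBot]
    {f : ι → α → ℝ} {g : α → ℝ} {I : ℝ}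
    (hf_int : ∀ i, Integrable (f i) μ) (hf_nonneg : ∀ᶠ i in l, 0 ≤ᵐ[μ] f i)
    (hf_lim : ∀ᵐ x ∂μ, Tendsto (fun i => f i x) l (𝓝 (g x)))
    (hI : Tendsto (fun i => ∫ x, f i x ∂μ) l (𝓝 I)) :
    ∫⁻ x, ENNReal.ofReal (g x) ∂μ ≤ ENNReal.ofReal I := calc
  ∫⁻ x, ENNReal.ofReal (g x) ∂μ = ∫⁻ x, liminf (fun i => ENNReal.ofReal (f i x)) l ∂μ :=
    lintegral_congr_ae <| hf_lim.mono fun _ hx => (ENNReal.tendsto_ofReal hx).liminf_eq.symm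
  _ ≤ liminf (fun i => ∫⁻ x, ENNReal.ofReal (f i x) ∂μ) l :=
    lintegral_liminf_le' fun i => (hf_int i).aemeasurable.ennreal_ofReal
  _ = liminf (fun i => ENNReal.ofReal (∫ x, f i x ∂μ)) l :=
    liminf_congr <| hf_nonneg.mono fun i hi =>
      (ofReal_integral_eq_lintegral_ofReal (hf_int i) hi).symm
  _ = ENNReal.ofReal I := (ENNReal.tendsto_ofReal hI).liminf_eq

theorem hasDerivAt_pdu {f : ℝ × ℝ → ℝ} (hf : Differentiable ℝ f) (u v : ℝ) :
    HasDerivAt (fun u => f (u, v)) (pdu f (u, v)) u :=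
  (hf (u, v)).hasFDerivAt.comp_hasDerivAt u ((hasDerivAt_id u).prodMk (hasDerivAt_const u v))

theorem continuous_pdu {f : ℝ × ℝ → ℝ} (hf : ContDiff ℝ 1 f) : Continuous (pdu f) :=
  (hf.continuous_fderiv one_ne_zero).clm_apply continuous_const

theorem integral_mul_pdu_self {f : ℝ × ℝ → ℝ} (hf : ContDiff ℝ 1 f) (a b v : ℝ) :
    ∫ u in a..b, f (u, v) * pdu f (u, v) = (f (b, v) ^ 2 - f (a, v) ^ 2) / 2 := by
  have hderiv (u : ℝ) : HasDerivAt (fun u => f (u, v) ^ 2 / 2) (f (u, v) * pdu f (u, v)) u := by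
    have h := ((hasDerivAt_pdu (hf.differentiable one_ne_zero) u v).fun_pow 2).div_const 2
    exact h.congr_deriv (by push_cast; ring)
  have hcont : Continuous fun u => f (u, v) * pdu f (u, v) :=
    (hf.continuous.comp (by fun_prop)).mul ((continuous_pdu hf).comp (by fun_prop))
  rw [intervalIntegral.integral_eq_sub_of_hasDerivAt (fun u _ => hderiv u)
    (hcont.intervalIntegrable a b)]
  ring

theorem le_of_tendsto_neg_mul_pdu {r : ℝ × ℝ → ℝ} (hr : ContDiff ℝ 1 r) {a b : ℝ}
    (hnonneg : ∀ᶠ v in atTop, ∀ u ∈ Set.Ioc a b, 0 ≤ -(r (u, v) * pdu r (u, v)))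
    (hlim : ∀ u ∈ Set.Ioc a b, Tendsto (fun v => -(r (u, v) * pdu r (u, v))) atTop (𝓝 1))
    (ha : Tendsto (fun v => r (a, v)) atTop (𝓝 0))
    (hb : Tendsto (fun v => r (b, v)) atTop (𝓝 0)) :
    b ≤ a := by
  refine le_of_not_gt fun hab => ?_
  have hflux (v : ℝ) : ∫ u in Set.Ioc a b, -(r (u, v) * pdu r (u, v)) =
      (r (a, v) ^ 2 - r (b, v) ^ 2) / 2 := by
    rw [integral_neg, ← intervalIntegral.integral_of_le hab.le, integral_mul_pdu_self hr]
    ring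
  have hflux_lim : Tendsto (fun v => ∫ u in Set.Ioc a b, -(r (u, v) * pdu r (u, v)))
      atTop (𝓝 0) := by
    simp_rw [hflux]
    simpa using ((ha.pow 2).sub (hb.pow 2)).div_const 2
  have hint (v : ℝ) : IntegrableOn (fun u => -(r (u, v) * pdu r (u, v))) (Set.Ioc a b) :=
    ((hr.continuous.comp (by fun_prop)).mul
      ((continuous_pdu hr).comp (by fun_prop))).neg.integrableOn_Ioc
  have hfatou : ∫⁻ _ in Set.Ioc a b, ENNReal.ofReal 1 ≤ ENNReal.ofReal 0 :=
    lintegral_ofReal_le_of_tendsto_integral hint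
      (hnonneg.mono fun _ hv => (ae_restrict_iff' measurableSet_Ioc).2 (ae_of_all _ hv))
      ((ae_restrict_iff' measurableSet_Ioc).2 (ae_of_all _ hlim)) hflux_lim
  rw [setLIntegral_const, ENNReal.ofReal_one, one_mul, Real.volume_Ioc,
    ENNReal.ofReal_le_ofReal_iff le_rfl] at hfatou
  linarith

theorem statement3_general
    (q0 msq u0 u1 s Lm Lp D cnu cOm COm Km : ℝ) :
    ∃ V0 : ℝ,
      ∀ v0 : ℝ, V0 ≤ v0 →
        ∀ S : Sol q0 msq (Set.Icc u0 u1 ×ˢ Set.Ici v0),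
          DataHyp S u0 v0 s Lm Lp D cnu cOm COm Km →
          -- gauge normalization
          (∀ u ∈ Set.Icc u0 u1,
            Tendsto (fun v => -(S.r (u, v) * pdu S.r (u, v))) atTop (𝓝 1)) →
            ∀ a ∈ Set.Icc u0 u1,
              (∀ u ∈ Set.Icc a u1, Tendsto (fun v => S.r (u, v)) atTop (𝓝 0)) →
                a = u1 := by
  refine ⟨0, fun v0 _ S hS hgauge a ha hcollapse => le_antisymm ha.2 ?_⟩
  have hmem {u v : ℝ} (hu : u ∈ Set.Ioc a u1) (hv : v0 ≤ v) :
      (u, v) ∈ Set.Icc u0 u1 ×ˢ Set.Ici v0 := ⟨⟨ha.1.trans hu.1.le, hu.2⟩, hv⟩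
  refine le_of_tendsto_neg_mul_pdu (S.smooth_r.of_le (by norm_num)) ?_
    (fun u hu => hgauge u ⟨ha.1.trans hu.1.le, hu.2⟩)
    (hcollapse a ⟨le_rfl, ha.2⟩) (hcollapse u1 ⟨ha.2, le_rfl⟩)
  filter_upwards [eventually_ge_atTop v0] with v hv u hu
  exact neg_nonneg.2 (mul_nonpos_of_nonneg_of_nonpos (S.r_pos _ (hmem hu hv)).le
    (hS.nu_neg _ (hmem hu hv)).le)

/-- exclusion of a collapsed ingoing null boundary segment `𝒮_{i⁺}`:
under the data hypotheses and the gauge normalization `lim_{v→∞} (-r∂_u r)(u,v) = 1`,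
provided `v₀` is sufficiently large, there is no ingoing null segment of positive
`u`-length along which the area-radius extends to zero at `v = ∞`. -/
theorem statement3
    (q0 msq u0 u1 s Lm Lp D cnu cOm COm Km : ℝ)
    (hq0 : q0 ≠ 0) (hmsq : 0 ≤ msq) (hu : u0 < u1) :
    ∃ V0 : ℝ,
      ∀ v0 : ℝ, V0 ≤ v0 →
        ∀ S : Sol q0 msq (Set.Icc u0 u1 ×ˢ Set.Ici v0),
          DataHyp S u0 v0 s Lm Lp D cnu cOm COm Km →
          -- gauge normalization
          (∀ u ∈ Set.Icc u0 u1,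
            Tendsto (fun v => -(S.r (u, v) * pdu S.r (u, v))) atTop (𝓝 1)) →
            ∀ a ∈ Set.Icc u0 u1,
              (∀ u ∈ Set.Icc a u1, Tendsto (fun v => S.r (u, v)) atTop (𝓝 0)) →
                a = u1 :=
  statement3_general q0 msq u0 u1 s Lm Lp D cnu cOm COm Km
end
end

section
/- Hardy–Cauchy–Schwarz bound for the scalar field along an ingoing direction: let u₀ < u₁, let r : [u₀,u₁] → (0,∞) be C¹ with r′(u) < 0 for all u, let q₀ ∈ ℝ, let A : [u₀,u₁] → ℝ be continuous, and let φ : [u₀,u₁] → ℂ be C¹. Write Dφ(u) = φ′(u) + i·q₀·A(u)·φ(u) and 𝓕(u) = ∫_{u₀}^{u} (r·|Dφ|²/|r′|)(u′) du′. Then for all u ∈ [u₀,u₁]: |φ(u)| ≤ |φ(u₀)| + 𝓕(u)^{1/2}·(log(r(u₀)/r(u)))^{1/2}. -/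
noncomputable section

open Real Filter Topology

/-! Multiplying `φ` by the unimodular phase `exp (i q₀ ∫ A)` turns the covariant derivative `Dφ`
into an ordinary derivative without changing `|φ|`, so `|φ(u)| ≤ |φ(u₀)| + ∫ |Dφ|`.
Cauchy–Schwarz against the weight `|r'|/r` bounds `∫ |Dφ|` by `𝓕(u)^{1/2} (∫ |r'|/r)^{1/2}`,
and the last integral is `log (r(u₀)/r(u))` because `r` decreases. -/

open Set MeasureTheory intervalIntegral

lemma hasDerivAt_gaugeTransform {φ : ℝ → ℂ} {φ' : ℂ} {B : ℝ → ℝ} {q A x : ℝ}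
    (hB : HasDerivAt B A x) (hφ : HasDerivAt φ φ' x) :
    HasDerivAt (fun y => Complex.exp (↑(q * B y) * Complex.I) * φ y)
      (Complex.exp (↑(q * B x) * Complex.I) * (φ' + Complex.I * q * A * φ x)) x := by
  have hphase := (((hB.const_mul q).ofReal_comp).mul_const Complex.I).cexp
  exact (hphase.mul hφ).congr_deriv (by push_cast; ring)

lemma norm_sub_le_integral_norm_deriv {E : Type*} [NormedAddCommGroup E] [NormedSpace ℝ E]
    [CompleteSpace E] {f f' : ℝ → E} {a b : ℝ} (hab : a ≤ b) (hf : ContinuousOn f (Icc a b))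
    (hderiv : ∀ x ∈ Ioo a b, HasDerivAt f (f' x) x) (hint : IntervalIntegrable f' volume a b) :
    ‖f b - f a‖ ≤ ∫ x in a..b, ‖f' x‖ := by
  rw [← integral_eq_sub_of_hasDerivAt_of_le hab hf hderiv hint]
  exact norm_integral_le_integral_norm hab

lemma norm_le_add_integral_norm_covariantDeriv {φ φ' : ℝ → ℂ} {A : ℝ → ℝ} {q a b : ℝ}
    (hab : a ≤ b) (hA : ContinuousOn A (Icc a b)) (hφ : ContinuousOn φ (Icc a b))
    (hderiv : ∀ x ∈ Ioo a b, HasDerivAt φ (φ' x) x)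
    (hD : IntervalIntegrable (fun x => φ' x + Complex.I * q * A x * φ x) volume a b) :
    ‖φ b‖ ≤ ‖φ a‖ + ∫ x in a..b, ‖φ' x + Complex.I * q * A x * φ x‖ := by
  set B : ℝ → ℝ := fun x => ∫ t in a..x, A t
  have hBc : ContinuousOn B (Icc a b) := by
    simpa [B, uIcc_of_le hab] using
      continuousOn_primitive_interval (μ := volume) (a := a) (b := b)
        (uIcc_of_le hab ▸ hA.integrableOn_Icc)
  have hBd : ∀ x ∈ Ioo a b, HasDerivAt B (A x) x := fun x hx =>
    integral_hasDerivAt_right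
      ((hA.mono (Icc_subset_Icc_right hx.2.le)).intervalIntegrable_of_Icc hx.1.le)
      ((hA.mono Ioo_subset_Icc_self).stronglyMeasurableAtFilter isOpen_Ioo x hx)
      (hA.continuousAt (Icc_mem_nhds hx.1 hx.2))
  set P : ℝ → ℂ := fun x => Complex.exp (↑(q * B x) * Complex.I)
  have hP : ∀ x, ‖P x‖ = 1 := fun x => Complex.norm_exp_ofReal_mul_I _
  have hPc : ContinuousOn P (Icc a b) := by fun_prop
  have key := norm_sub_le_integral_norm_deriv hab (hPc.mul hφ)
    (fun x hx => hasDerivAt_gaugeTransform (hBd x hx) (hderiv x hx))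
    (hD.continuousOn_mul (uIcc_of_le hab ▸ hPc))
  calc ‖φ b‖ ≤ ‖φ a‖ + ‖P b * φ b - P a * φ a‖ := by
        simpa only [norm_mul, hP, one_mul] using norm_le_insert' (P b * φ b) (P a * φ a)
    _ ≤ ‖φ a‖ + ∫ x in a..b, ‖φ' x + Complex.I * q * A x * φ x‖ := by
        gcongr
        simpa only [Pi.mul_apply, norm_mul, Complex.norm_exp_ofReal_mul_I, one_mul] using key

lemma integral_mul_le_sqrt_integral_sq_mul_sqrt_integral_sq {f g : ℝ → ℝ} {a b : ℝ}
    (hab : a ≤ b) (hf : ContinuousOn f (Icc a b)) (hg : ContinuousOn g (Icc a b))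
    (hf0 : ∀ x ∈ Icc a b, 0 ≤ f x) (hg0 : ∀ x ∈ Icc a b, 0 ≤ g x) :
    ∫ x in a..b, f x * g x ≤ √(∫ x in a..b, f x ^ 2) * √(∫ x in a..b, g x ^ 2) := by
  have hmemLp : ∀ h : ℝ → ℝ, ContinuousOn h (Icc a b) →
      MemLp h (ENNReal.ofReal 2) (volume.restrict (Ioc a b)) := fun h hh => by
    obtain ⟨C, hC⟩ := isCompact_Icc.exists_bound_of_continuousOn hh
    exact MemLp.of_bound ((hh.mono Ioc_subset_Icc_self).aestronglyMeasurable measurableSet_Ioc) C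
      (ae_restrict_of_forall_mem measurableSet_Ioc fun x hx => hC x (Ioc_subset_Icc_self hx))
  have hnonneg : ∀ h : ℝ → ℝ, (∀ x ∈ Icc a b, 0 ≤ h x) →
      0 ≤ᵐ[volume.restrict (Ioc a b)] h := fun h hh =>
    ae_restrict_of_forall_mem measurableSet_Ioc fun x hx => hh x (Ioc_subset_Icc_self hx)
  have := integral_mul_le_Lp_mul_Lq_of_nonneg (p := 2) (q := 2) HolderConjugate.two_two
    (hnonneg f hf0) (hnonneg g hg0) (hmemLp f hf) (hmemLp g hg)
  simpa only [integral_of_le hab, sqrt_eq_rpow, rpow_two] using this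

lemma integral_le_sqrt_integral_sq_div_mul_sqrt_integral {f w : ℝ → ℝ} {a b : ℝ} (hab : a ≤ b)
    (hf : ContinuousOn f (Icc a b)) (hw : ContinuousOn w (Icc a b))
    (hf0 : ∀ x ∈ Icc a b, 0 ≤ f x) (hw0 : ∀ x ∈ Icc a b, 0 < w x) :
    ∫ x in a..b, f x ≤ √(∫ x in a..b, f x ^ 2 / w x) * √(∫ x in a..b, w x) := by
  have hsqrt : ContinuousOn (fun x => √(w x)) (Icc a b) := hw.sqrt
  have hcs := integral_mul_le_sqrt_integral_sq_mul_sqrt_integral_sq (f := fun x => f x / √(w x)) hab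
    (hf.div hsqrt fun x hx => (sqrt_pos.2 (hw0 x hx)).ne') hsqrt
    (fun x hx => div_nonneg (hf0 x hx) (sqrt_nonneg _)) (fun x _ => sqrt_nonneg _)
  have hw0' : ∀ x ∈ uIcc a b, 0 < w x := uIcc_of_le hab ▸ hw0
  have hmul : ∫ x in a..b, f x / √(w x) * √(w x) = ∫ x in a..b, f x :=
    integral_congr fun x hx => div_mul_cancel₀ (f x) (sqrt_pos.2 (hw0' x hx)).ne'
  have hsq₁ : ∫ x in a..b, (f x / √(w x)) ^ 2 = ∫ x in a..b, f x ^ 2 / w x :=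
    integral_congr fun x hx => by simp only [div_pow, sq_sqrt (hw0' x hx).le]
  have hsq₂ : ∫ x in a..b, √(w x) ^ 2 = ∫ x in a..b, w x :=
    integral_congr fun x hx => sq_sqrt (hw0' x hx).le
  rwa [hmul, hsq₁, hsq₂] at hcs

lemma integral_abs_deriv_div_eq_log_div {r r' : ℝ → ℝ} {a b : ℝ} (hab : a ≤ b)
    (hr : ∀ x ∈ Icc a b, HasDerivAt r (r' x) x) (hr' : ContinuousOn r' (Icc a b))
    (hpos : ∀ x ∈ Icc a b, 0 < r x) (hneg : ∀ x ∈ Icc a b, r' x ≤ 0) :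
    ∫ x in a..b, |r' x| / r x = log (r a / r b) := by
  rw [← uIcc_of_le hab] at hr hr' hpos hneg
  have hrc : ContinuousOn r (uIcc a b) := fun x hx => (hr x hx).continuousAt.continuousWithinAt
  have hderiv : ∀ x ∈ uIcc a b, HasDerivAt (fun y => -log (r y)) (|r' x| / r x) x := fun x hx =>
    ((hr x hx).log (hpos x hx).ne').neg.congr_deriv
      (by rw [abs_of_nonpos (hneg x hx), neg_div])
  have hint : IntervalIntegrable (fun x => |r' x| / r x) volume a b :=
    (hr'.abs.div hrc fun x hx => (hpos x hx).ne').intervalIntegrable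
  rw [integral_eq_sub_of_hasDerivAt hderiv hint,
    log_div (hpos a left_mem_uIcc).ne' (hpos b right_mem_uIcc).ne']
  ring

theorem statement13_general (u0 u1 q0 : ℝ)
    (r r' A : ℝ → ℝ) (φ φ' : ℝ → ℂ)
    (hr : ∀ u ∈ Set.Icc u0 u1, HasDerivAt r (r' u) u)
    (hr'cont : ContinuousOn r' (Set.Icc u0 u1))
    (hrpos : ∀ u ∈ Set.Icc u0 u1, 0 < r u)
    (hr'neg : ∀ u ∈ Set.Icc u0 u1, r' u < 0)
    (hA : ContinuousOn A (Set.Icc u0 u1))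
    (hφ : ∀ u ∈ Set.Icc u0 u1, HasDerivAt φ (φ' u) u)
    (hφ'cont : ContinuousOn φ' (Set.Icc u0 u1)) :
    ∀ u ∈ Set.Icc u0 u1,
      ‖φ u‖ ≤ ‖φ u0‖ +
        Real.sqrt (∫ x in u0..u,
            r x * Complex.normSq (φ' x + Complex.I * (q0 : ℂ) * (A x : ℂ) * φ x) / |r' x|) *
          Real.sqrt (Real.log (r u0 / r u)) := by
  intro u ⟨hu0, hu1⟩
  have hsub : Icc u0 u ⊆ Icc u0 u1 := Icc_subset_Icc_right hu1
  have hrc : ContinuousOn r (Icc u0 u) := fun x hx =>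
    (hr x (hsub hx)).continuousAt.continuousWithinAt
  have hφc : ContinuousOn φ (Icc u0 u) := fun x hx =>
    (hφ x (hsub hx)).continuousAt.continuousWithinAt
  set D : ℝ → ℂ := fun x => φ' x + Complex.I * q0 * A x * φ x
  have hDc : ContinuousOn D (Icc u0 u) := by
    have := hA.mono hsub; have := hφ'cont.mono hsub; fun_prop
  have hw : ContinuousOn (fun x => |r' x| / r x) (Icc u0 u) :=
    (hr'cont.mono hsub).abs.div hrc fun x hx => (hrpos x (hsub hx)).ne'
  have hflux : ∫ x in u0..u, ‖D x‖ ^ 2 / (|r' x| / r x) =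
      ∫ x in u0..u, r x * Complex.normSq (D x) / |r' x| :=
    integral_congr fun x _ => by rw [Complex.normSq_eq_norm_sq]; field_simp
  calc ‖φ u‖ ≤ ‖φ u0‖ + ∫ x in u0..u, ‖D x‖ :=
        norm_le_add_integral_norm_covariantDeriv hu0 (hA.mono hsub) hφc
          (fun x hx => hφ x (hsub (Ioo_subset_Icc_self hx)))
          (hDc.intervalIntegrable_of_Icc hu0)
    _ ≤ ‖φ u0‖ + √(∫ x in u0..u, ‖D x‖ ^ 2 / (|r' x| / r x)) *
          √(∫ x in u0..u, |r' x| / r x) := by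
        gcongr
        exact integral_le_sqrt_integral_sq_div_mul_sqrt_integral hu0 hDc.norm hw
          (fun x _ => norm_nonneg _) fun x hx =>
            div_pos (abs_pos.2 (hr'neg x (hsub hx)).ne) (hrpos x (hsub hx))
    _ = _ := by
        rw [hflux, integral_abs_deriv_div_eq_log_div hu0 (fun x hx => hr x (hsub hx))
          (hr'cont.mono hsub) (fun x hx => hrpos x (hsub hx)) fun x hx => (hr'neg x (hsub hx)).le]

/-- Hardy–Cauchy–Schwarz bound for the scalar field along an ingoing
direction: with `Dφ = φ' + i q₀ A φ` and flux `𝓕(u) = ∫_{u₀}^{u} r|Dφ|²/|r'|`, one has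
`|φ(u)| ≤ |φ(u₀)| + 𝓕(u)^{1/2}·(log(r(u₀)/r(u)))^{1/2}`. -/
theorem statement13 (u0 u1 q0 : ℝ) (h01 : u0 < u1)
    (r r' A : ℝ → ℝ) (φ φ' : ℝ → ℂ)
    (hr : ∀ u ∈ Set.Icc u0 u1, HasDerivAt r (r' u) u)
    (hr'cont : ContinuousOn r' (Set.Icc u0 u1))
    (hrpos : ∀ u ∈ Set.Icc u0 u1, 0 < r u)
    (hr'neg : ∀ u ∈ Set.Icc u0 u1, r' u < 0)
    (hA : ContinuousOn A (Set.Icc u0 u1))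
    (hφ : ∀ u ∈ Set.Icc u0 u1, HasDerivAt φ (φ' u) u)
    (hφ'cont : ContinuousOn φ' (Set.Icc u0 u1)) :
    ∀ u ∈ Set.Icc u0 u1,
      ‖φ u‖ ≤ ‖φ u0‖ +
        Real.sqrt (∫ x in u0..u,
            r x * Complex.normSq (φ' x + Complex.I * (q0 : ℂ) * (A x : ℂ) * φ x) / |r' x|) *
          Real.sqrt (Real.log (r u0 / r u)) :=
  statement13_general u0 u1 q0 r r' A φ φ' hr hr'cont hrpos hr'neg hA hφ hφ'cont

end
end

section
/- Raychaudhuri identity and lapse bounds along an ingoing direction: let u₀ < u₁, let r : [u₀,u₁] → (0,∞) and Ω² : [u₀,u₁] → (0,∞) be C¹ with r′(u) < 0 for all u, let q₀ ∈ ℝ, A : [u₀,u₁] → ℝ continuous, φ : [u₀,u₁] → ℂ C¹, write Dφ = φ′ + i·q₀·A·φ and 𝓕(u) = ∫_{u₀}^{u} (r·|Dφ|²/|r′|)(u′) du′, and assume the Raychaudhuri equation (r′/Ω²)′(u) = −(r/Ω²)(u)·|Dφ(u)|² holds on [u₀,u₁]. Then for all u ∈ [u₀,u₁]: (i) Ω²(u)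 = (|r′(u)|/|r′(u₀)|)·Ω²(u₀)·e^{−𝓕(u)}; (ii) Ω²(u) ≤ Ω²(u₀)·(−r′(u))/(−r′(u₀)); and (iii) ∫_{u₀}^{u₁} Ω²(u′) du′ ≤ r(u₀)²·Ω²(u₀)/((−r·r′)(u₀)). -/
open Real Set

/-! The Raychaudhuri equation says that `-r'/Ω²` is positive and nondecreasing, with logarithmic
derivative exactly the flux density `r |Dφ|² / |r'|`. Integrating gives the identity (i), and since
the flux is nonnegative, `Ω² ≤ Ω²(u₀) r'/r'(u₀)`; integrating this bound against `-r' = (-r)'`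
and dropping `r(u₁) > 0` gives (iii). Both derivatives being integrated have a sign, which is what
makes them integrable. -/

theorem intervalIntegrable_of_hasDerivAt_of_nonneg {f f' : ℝ → ℝ} {a b : ℝ} (hab : a ≤ b)
    (hderiv : ∀ x ∈ Icc a b, HasDerivAt f (f' x) x) (hf' : ∀ x ∈ Icc a b, 0 ≤ f' x) :
    IntervalIntegrable f' MeasureTheory.volume a b :=
  (intervalIntegrable_iff_integrableOn_Ioc_of_le hab).2 <|
    intervalIntegral.integrableOn_deriv_of_nonneg
      (fun x hx => (hderiv x hx).continuousAt.continuousWithinAt)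
      (fun x hx => hderiv x (Ioo_subset_Icc_self hx)) (fun x hx => hf' x (Ioo_subset_Icc_self hx))

theorem integral_eq_sub_of_hasDerivAt_of_nonneg {f f' : ℝ → ℝ} {a b : ℝ} (hab : a ≤ b)
    (hderiv : ∀ x ∈ Icc a b, HasDerivAt f (f' x) x) (hf' : ∀ x ∈ Icc a b, 0 ≤ f' x) :
    ∫ x in a..b, f' x = f b - f a :=
  intervalIntegral.integral_eq_sub_of_hasDerivAt
    (fun x hx => hderiv x (by rwa [uIcc_of_le hab] at hx))
    (intervalIntegrable_of_hasDerivAt_of_nonneg hab hderiv hf')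

theorem eq_mul_exp_integral_logDeriv_of_nonneg {h h' : ℝ → ℝ} {a b : ℝ} (hab : a ≤ b)
    (hpos : ∀ x ∈ Icc a b, 0 < h x) (hderiv : ∀ x ∈ Icc a b, HasDerivAt h (h' x) x)
    (hh' : ∀ x ∈ Icc a b, 0 ≤ h' x) :
    h b = h a * exp (∫ x in a..b, h' x / h x) := by
  have hlog : ∫ x in a..b, h' x / h x = log (h b) - log (h a) :=
    integral_eq_sub_of_hasDerivAt_of_nonneg hab
      (fun x hx => (hderiv x hx).log (hpos x hx).ne')
      (fun x hx => div_nonneg (hh' x hx) (hpos x hx).le)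
  rw [hlog, exp_sub, exp_log (hpos a ⟨le_rfl, hab⟩), exp_log (hpos b ⟨hab, le_rfl⟩)]
  field_simp [(hpos a ⟨le_rfl, hab⟩).ne']

section Raychaudhuri

variable {r r' Om2 D : ℝ → ℝ} {u0 u1 : ℝ}

theorem lapse_eq_of_raychaudhuri (hrpos : ∀ u ∈ Icc u0 u1, 0 < r u)
    (hr'neg : ∀ u ∈ Icc u0 u1, r' u < 0) (hOm2pos : ∀ u ∈ Icc u0 u1, 0 < Om2 u)
    (hD : ∀ u ∈ Icc u0 u1, 0 ≤ D u)
    (hRay : ∀ u ∈ Icc u0 u1, HasDerivAt (fun x => r' x / Om2 x) (-(r u / Om2 u) * D u) u) :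
    ∀ u ∈ Icc u0 u1,
      Om2 u = |r' u| / |r' u0| * Om2 u0 * exp (-∫ x in u0..u, r x * D x / |r' x|) := by
  intro u hu
  have hsub : Icc u0 u ⊆ Icc u0 u1 := Icc_subset_Icc_right hu.2
  have hu0 : u0 ∈ Icc u0 u1 := ⟨le_rfl, hu.1.trans hu.2⟩
  have hflux : ∫ x in u0..u, r x * D x / |r' x|
      = ∫ x in u0..u, r x / Om2 x * D x / -(r' x / Om2 x) := by
    refine intervalIntegral.integral_congr fun x hx => ?_
    rw [uIcc_of_le hu.1] at hx
    have := (hOm2pos x (hsub hx)).ne'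
    rw [abs_of_neg (hr'neg x (hsub hx))]
    field_simp
  have hexp := eq_mul_exp_integral_logDeriv_of_nonneg hu.1
    (fun x hx => neg_pos.2 (div_neg_of_neg_of_pos (hr'neg x (hsub hx)) (hOm2pos x (hsub hx))))
    (fun x hx => by simpa using (hRay x (hsub hx)).fun_neg)
    (fun x hx => mul_nonneg (div_pos (hrpos x (hsub hx)) (hOm2pos x (hsub hx))).le (hD x (hsub hx)))
  rw [hflux, exp_neg, abs_of_neg (hr'neg u hu), abs_of_neg (hr'neg u0 hu0)]
  have hE := exp_pos (∫ x in u0..u, r x / Om2 x * D x / -(r' x / Om2 x))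
  generalize exp (∫ x in u0..u, r x / Om2 x * D x / -(r' x / Om2 x)) = E at hE hexp ⊢
  field_simp [(hOm2pos u hu).ne', (hOm2pos u0 hu0).ne', (hr'neg u0 hu0).ne] at hexp ⊢
  linarith

theorem lapse_le_of_raychaudhuri (hrpos : ∀ u ∈ Icc u0 u1, 0 < r u)
    (hr'neg : ∀ u ∈ Icc u0 u1, r' u < 0) (hOm2pos : ∀ u ∈ Icc u0 u1, 0 < Om2 u)
    (hD : ∀ u ∈ Icc u0 u1, 0 ≤ D u)
    (hRay : ∀ u ∈ Icc u0 u1, HasDerivAt (fun x => r' x / Om2 x) (-(r u / Om2 u) * D u) u) :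
    ∀ u ∈ Icc u0 u1, Om2 u ≤ Om2 u0 * (-r' u) / (-r' u0) := by
  intro u hu
  have hu0 : u0 ∈ Icc u0 u1 := ⟨le_rfl, hu.1.trans hu.2⟩
  have hflux : 0 ≤ ∫ x in u0..u, r x * D x / |r' x| :=
    intervalIntegral.integral_nonneg hu.1 fun x hx =>
      div_nonneg (mul_nonneg (hrpos x ⟨hx.1, hx.2.trans hu.2⟩).le (hD x ⟨hx.1, hx.2.trans hu.2⟩))
        (abs_nonneg _)
  calc Om2 u = |r' u| / |r' u0| * Om2 u0 * exp (-∫ x in u0..u, r x * D x / |r' x|) :=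
        lapse_eq_of_raychaudhuri hrpos hr'neg hOm2pos hD hRay u hu
    _ ≤ |r' u| / |r' u0| * Om2 u0 * 1 := by
        gcongr
        · exact mul_nonneg (by positivity) (hOm2pos u0 hu0).le
        · exact exp_le_one_iff.2 (neg_nonpos.2 hflux)
    _ = Om2 u0 * (-r' u) / (-r' u0) := by
        rw [abs_of_neg (hr'neg u hu), abs_of_neg (hr'neg u0 hu0)]
        ring

theorem integral_le_of_le_mul_neg_deriv (hu01 : u0 ≤ u1)
    (hr : ∀ u ∈ Icc u0 u1, HasDerivAt r (r' u) u) (hrpos : ∀ u ∈ Icc u0 u1, 0 < r u)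
    (hr'neg : ∀ u ∈ Icc u0 u1, r' u < 0) (hOm2pos : ∀ u ∈ Icc u0 u1, 0 < Om2 u)
    (hOm2cont : ContinuousOn Om2 (Icc u0 u1))
    (hOm2 : ∀ u ∈ Icc u0 u1, Om2 u ≤ Om2 u0 * (-r' u) / (-r' u0)) :
    ∫ x in u0..u1, Om2 x ≤ r u0 ^ 2 * Om2 u0 / (-(r u0 * r' u0)) := by
  have hu0 : u0 ∈ Icc u0 u1 := ⟨le_rfl, hu01⟩
  have hderiv : ∀ x ∈ Icc u0 u1, HasDerivAt (fun x => -r x) (-r' x) x := fun x hx => (hr x hx).neg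
  have hr'nonneg : ∀ x ∈ Icc u0 u1, 0 ≤ -r' x := fun x hx => (neg_pos.2 (hr'neg x hx)).le
  set c := Om2 u0 / -r' u0
  calc ∫ x in u0..u1, Om2 x ≤ ∫ x in u0..u1, c * -r' x :=
        intervalIntegral.integral_mono_on hu01 (hOm2cont.intervalIntegrable_of_Icc hu01)
          ((intervalIntegrable_of_hasDerivAt_of_nonneg hu01 hderiv hr'nonneg).const_mul c)
          fun x hx => (hOm2 x hx).trans_eq (by ring)
    _ = c * (r u0 - r u1) := by
        rw [intervalIntegral.integral_const_mul,
          integral_eq_sub_of_hasDerivAt_of_nonneg hu01 hderiv hr'nonneg, neg_sub_neg]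
    _ ≤ c * r u0 := by
        have : 0 ≤ c := div_nonneg (hOm2pos u0 hu0).le (hr'nonneg u0 hu0)
        gcongr
        linarith [hrpos u1 ⟨hu01, le_rfl⟩]
    _ = r u0 ^ 2 * Om2 u0 / (-(r u0 * r' u0)) := by
        simp only [c]
        field_simp [(hrpos u0 hu0).ne', (hr'neg u0 hu0).ne]

end Raychaudhuri

theorem statement14_general (u0 u1 q0 : ℝ)
    (r r' Om2 A : ℝ → ℝ) (φ φ' : ℝ → ℂ)
    (hr : ∀ u ∈ Set.Icc u0 u1, HasDerivAt r (r' u) u)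
    (hrpos : ∀ u ∈ Set.Icc u0 u1, 0 < r u)
    (hr'neg : ∀ u ∈ Set.Icc u0 u1, r' u < 0)
    (hOm2pos : ∀ u ∈ Set.Icc u0 u1, 0 < Om2 u)
    (hOm2cont : ContinuousOn Om2 (Set.Icc u0 u1))
    -- the ingoing Raychaudhuri equation
    (hRay : ∀ u ∈ Set.Icc u0 u1,
      HasDerivAt (fun x => r' x / Om2 x)
        (-(r u / Om2 u) *
          Complex.normSq (φ' u + Complex.I * (q0 : ℂ) * (A u : ℂ) * φ u)) u) :
    ∀ u ∈ Set.Icc u0 u1,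
      (Om2 u = |r' u| / |r' u0| * Om2 u0 *
          Real.exp (-(∫ x in u0..u,
            r x * Complex.normSq (φ' x + Complex.I * (q0 : ℂ) * (A x : ℂ) * φ x) / |r' x|))) ∧
      Om2 u ≤ Om2 u0 * (-r' u) / (-r' u0) ∧
      (∫ x in u0..u1, Om2 x) ≤ r u0 ^ 2 * Om2 u0 / (-(r u0 * r' u0)) := by
  have hD : ∀ u ∈ Icc u0 u1,
      0 ≤ Complex.normSq (φ' u + Complex.I * (q0 : ℂ) * (A u : ℂ) * φ u) :=
    fun _ _ => Complex.normSq_nonneg _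
  have hlapse := lapse_le_of_raychaudhuri hrpos hr'neg hOm2pos hD hRay
  intro u hu
  exact ⟨lapse_eq_of_raychaudhuri hrpos hr'neg hOm2pos hD hRay u hu, hlapse u hu,
    integral_le_of_le_mul_neg_deriv (hu.1.trans hu.2) hr hrpos hr'neg hOm2pos hOm2cont hlapse⟩

/-- Raychaudhuri identity and lapse bounds along an ingoing direction:
if `(r'/Ω²)' = -(r/Ω²)|Dφ|²` on `[u₀,u₁]`, then with `𝓕(u) = ∫_{u₀}^{u} r|Dφ|²/|r'|` one has
(i) `Ω²(u) = (|r'(u)|/|r'(u₀)|)·Ω²(u₀)·e^{-𝓕(u)}`,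
(ii) `Ω²(u) ≤ Ω²(u₀)·(-r'(u))/(-r'(u₀))`, and
(iii) `∫_{u₀}^{u₁} Ω² ≤ r(u₀)²·Ω²(u₀)/((-r·r')(u₀))`. -/
theorem statement14 (u0 u1 q0 : ℝ) (h01 : u0 < u1)
    (r r' Om2 A : ℝ → ℝ) (φ φ' : ℝ → ℂ)
    (hr : ∀ u ∈ Set.Icc u0 u1, HasDerivAt r (r' u) u)
    (hr'cont : ContinuousOn r' (Set.Icc u0 u1))
    (hrpos : ∀ u ∈ Set.Icc u0 u1, 0 < r u)
    (hr'neg : ∀ u ∈ Set.Icc u0 u1, r' u < 0)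
    (hOm2pos : ∀ u ∈ Set.Icc u0 u1, 0 < Om2 u)
    (hOm2cont : ContinuousOn Om2 (Set.Icc u0 u1))
    (hA : ContinuousOn A (Set.Icc u0 u1))
    (hφ : ∀ u ∈ Set.Icc u0 u1, HasDerivAt φ (φ' u) u)
    (hφ'cont : ContinuousOn φ' (Set.Icc u0 u1))
    -- the ingoing Raychaudhuri equation
    (hRay : ∀ u ∈ Set.Icc u0 u1,
      HasDerivAt (fun x => r' x / Om2 x)
        (-(r u / Om2 u) *
          Complex.normSq (φ' u + Complex.I * (q0 : ℂ) * (A u : ℂ) * φ u)) u) :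
    ∀ u ∈ Set.Icc u0 u1,
      (Om2 u = |r' u| / |r' u0| * Om2 u0 *
          Real.exp (-(∫ x in u0..u,
            r x * Complex.normSq (φ' x + Complex.I * (q0 : ℂ) * (A x : ℂ) * φ x) / |r' x|))) ∧
      Om2 u ≤ Om2 u0 * (-r' u) / (-r' u0) ∧
      (∫ x in u0..u1, Om2 x) ≤ r u0 ^ 2 * Om2 u0 / (-(r u0 * r' u0)) :=
  statement14_general u0 u1 q0 r r' Om2 A φ φ' hr hrpos hr'neg hOm2pos hOm2cont hRay
end

section
/- A priori control of the outgoing radial derivative (the trapping estimate): there is a numerical constant C > 0 with the following property. Let a solution of the EMKG system be defined on [u₀,u₁]×J (J an interval) with r > 0 and ∂_u r < 0 throughout. Then for every (u,v) ∈ [u₀,u₁]×J: |−r∂_vr(u,v) + (r∂_vr)(u₀,v)| ≤ C·(r(u₀,v)/r(u,v))·(Ω²(u₀,v)/(−r∂_ur)(u₀,v))·( r(u₀,v)² + Q(u₀,v)² + q₀²·r(u₀,v)⁴·(1+|φ(u₀,v)|⁴) + m²·r(u₀,v)⁴·(1+|φ(u₀,v)|²) ). -/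
noncomputable section

open Real Filter Topology

/-!
Along a line of constant `v` everything is an ODE in `u`. The Raychaudhuri equation
`∂_u(∂_u r/Ω²) = -(r/Ω²)|D_u φ|²` makes `∂_u r/Ω²` integrable in closed form: with
`𝓕 = log((∂_u r/Ω²)/(∂_u r/Ω²)(u₀))` one has `Ω² = |∂_u r| (Ω²/|∂_u r|)(u₀) e^{-𝓕}` and
`𝓕' = r|D_u φ|²/|∂_u r|`. The same quantity `𝓕` controls the scalar field and the charge:
by AM-GM, `r|φ|² ≤ r(u₀)(|φ|²(u₀) + 𝓕)` and `|Q - Q(u₀)| ≤ |q₀| r(u₀)² (|φ|²(u₀) + 𝓕)`.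
Inserting these into `∂_u(r ∂_v r) = -Ω²/4 + Ω²Q²/(4r²) + m²r²Ω²|φ|²/4`, every power of `𝓕`
comes with a factor `e^{-𝓕}`, and `e^{-𝓕}𝓕^p ≤ p!`; what is left is `|∂_u r|` times a
polynomial in `r` and `1/r`, which integrates explicitly in `r`.
-/

open Set

theorem sub_le_sub_of_hasDerivAt_le {f g f' g' : ℝ → ℝ} {a b x : ℝ}
    (hf : ∀ t ∈ Icc a b, HasDerivAt f (f' t) t) (hg : ∀ t ∈ Icc a b, HasDerivAt g (g' t) t)
    (hle : ∀ t ∈ Ico a b, f' t ≤ g' t) (hx : x ∈ Icc a b) :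
    f x - f a ≤ g x - g a := by
  have hB : ∀ t ∈ Icc a b, HasDerivAt (fun s => g s - g a + f a) (g' t) t := fun t ht =>
    ((hg t ht).sub_const _).add_const _
  have := image_le_of_deriv_right_le_deriv_boundary
    (fun t ht => (hf t ht).continuousAt.continuousWithinAt)
    (fun t ht => (hf t (Ico_subset_Icc_self ht)).hasDerivWithinAt) (by simp)
    (fun t ht => (hB t ht).continuousAt.continuousWithinAt)
    (fun t ht => (hB t (Ico_subset_Icc_self ht)).hasDerivWithinAt) hle hx
  linarith

theorem abs_sub_le_sub_of_abs_hasDerivAt_le {f g f' g' : ℝ → ℝ} {a b x : ℝ}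
    (hf : ∀ t ∈ Icc a b, HasDerivAt f (f' t) t) (hg : ∀ t ∈ Icc a b, HasDerivAt g (g' t) t)
    (hle : ∀ t ∈ Ico a b, |f' t| ≤ g' t) (hx : x ∈ Icc a b) :
    |f x - f a| ≤ g x - g a := by
  have hup := sub_le_sub_of_hasDerivAt_le hf hg (fun t ht => (le_abs_self _).trans (hle t ht)) hx
  have hlo := sub_le_sub_of_hasDerivAt_le (f' := fun t => -f' t) (fun t ht => (hf t ht).neg) hg
    (fun t ht => (neg_le_abs _).trans (hle t ht)) hx
  simp only [Pi.neg_apply] at hlo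
  rw [abs_le]
  constructor <;> linarith

theorem image_le_left_of_hasDerivAt_nonpos {f f' : ℝ → ℝ} {a b x : ℝ}
    (hf : ∀ t ∈ Icc a b, HasDerivAt f (f' t) t) (hf' : ∀ t ∈ Ico a b, f' t ≤ 0)
    (hx : x ∈ Icc a b) : f x ≤ f a := by
  have := sub_le_sub_of_hasDerivAt_le hf (fun t _ => hasDerivAt_const t (0 : ℝ)) hf' hx
  linarith

theorem left_le_image_of_hasDerivAt_nonneg {f f' : ℝ → ℝ} {a b x : ℝ}
    (hf : ∀ t ∈ Icc a b, HasDerivAt f (f' t) t) (hf' : ∀ t ∈ Ico a b, 0 ≤ f' t)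
    (hx : x ∈ Icc a b) : f a ≤ f x := by
  have := sub_le_sub_of_hasDerivAt_le (fun t _ => hasDerivAt_const t (0 : ℝ)) hf hf' hx
  linarith

theorem Real.pow_mul_exp_neg_le_factorial {t : ℝ} (ht : 0 ≤ t) (n : ℕ) :
    t ^ n * Real.exp (-t) ≤ n.factorial := by
  have h := Real.pow_div_factorial_le_exp t ht n
  rw [div_le_iff₀ (by positivity)] at h
  rw [Real.exp_neg, ← div_eq_mul_inv, div_le_iff₀ (Real.exp_pos t)]
  linarith

theorem Real.exp_neg_mul_add_le {s t : ℝ} (ht : 0 ≤ t) (hs : 0 ≤ s) :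
    Real.exp (-t) * (s + t) ≤ s + 1 := by
  have h1 := Real.pow_mul_exp_neg_le_factorial ht 1
  have h2 : Real.exp (-t) ≤ 1 := Real.exp_le_one_iff.2 (by linarith)
  simp only [pow_one, Nat.factorial_one, Nat.cast_one] at h1
  nlinarith

theorem Real.exp_neg_mul_sq_le_of_abs_sub_le {Q Q₀ k s t : ℝ} (ht : 0 ≤ t)
    (hQ : |Q - Q₀| ≤ k * (s + t)) :
    Real.exp (-t) * Q ^ 2 ≤ 2 * Q₀ ^ 2 + 4 * k ^ 2 * (s ^ 2 + 2) := by
  have he0 := Real.exp_pos (-t)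
  have he1 : Real.exp (-t) ≤ 1 := Real.exp_le_one_iff.2 (by linarith)
  have h2 := Real.pow_mul_exp_neg_le_factorial ht 2
  norm_num at h2
  have hQsq : Q ^ 2 ≤ 2 * Q₀ ^ 2 + 2 * k ^ 2 * (s + t) ^ 2 := by
    have := abs_le.1 hQ
    nlinarith [sq_nonneg (Q - Q₀ - k * (s + t)), sq_nonneg (Q - 2 * Q₀)]
  have hst : Real.exp (-t) * (s + t) ^ 2 ≤ 2 * s ^ 2 + 4 := by
    nlinarith [sq_nonneg (s - t), mul_nonneg he0.le (sq_nonneg (s - t))]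
  calc Real.exp (-t) * Q ^ 2
      ≤ Real.exp (-t) * (2 * Q₀ ^ 2 + 2 * k ^ 2 * (s + t) ^ 2) :=
        mul_le_mul_of_nonneg_left hQsq he0.le
    _ = 2 * Q₀ ^ 2 * Real.exp (-t) + 2 * k ^ 2 * (Real.exp (-t) * (s + t) ^ 2) := by ring
    _ ≤ 2 * Q₀ ^ 2 * 1 + 2 * k ^ 2 * (2 * s ^ 2 + 4) := by gcongr
    _ = 2 * Q₀ ^ 2 + 4 * k ^ 2 * (s ^ 2 + 2) := by ring

theorem abs_emkg_source_le {ω ρ Q y msq n e κ K A : ℝ} (hω : ω = 4 * κ * n * e) (hn : 0 ≤ n)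
    (hκ : 0 ≤ κ) (hρ : 0 < ρ) (hmsq : 0 ≤ msq) (hy : 0 ≤ y) (he₀ : 0 ≤ e) (he : e ≤ 1)
    (hQ : e * Q ^ 2 ≤ K) (hA : e * (y * ρ) ≤ A) :
    |-ω / 4 + ω * Q ^ 2 / (4 * ρ ^ 2) + msq * ρ ^ 2 * ω * y / 4|
      ≤ κ * n * (1 + K / ρ ^ 2 + msq * A * ρ) := by
  have hS : 0 ≤ Q ^ 2 / ρ ^ 2 + msq * ρ ^ 2 * y := by positivity
  have hω4 : 0 ≤ ω / 4 := by rw [hω]; positivity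
  have hmA : msq * ρ * (e * (y * ρ)) ≤ msq * A * ρ := by
    nlinarith [mul_le_mul_of_nonneg_left hA (mul_nonneg hmsq hρ.le)]
  calc _ = |ω / 4 * (-1 + (Q ^ 2 / ρ ^ 2 + msq * ρ ^ 2 * y))| := by
        congr 1
        field_simp
        ring
    _ = ω / 4 * |-1 + (Q ^ 2 / ρ ^ 2 + msq * ρ ^ 2 * y)| := by rw [abs_mul, abs_of_nonneg hω4]
    _ ≤ ω / 4 * (1 + (Q ^ 2 / ρ ^ 2 + msq * ρ ^ 2 * y)) :=
        mul_le_mul_of_nonneg_left (abs_le.2 ⟨by linarith, by linarith⟩) hω4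
    _ = κ * n * (e + e * Q ^ 2 / ρ ^ 2 + msq * ρ * (e * (y * ρ))) := by
        rw [hω]
        field_simp
        ring
    _ ≤ κ * n * (1 + K / ρ ^ 2 + msq * A * ρ) := by gcongr

theorem sq_mul_mul_le_of_sq_mul_le {r r₀ a b n s : ℝ} (hr : 0 < r) (hrr₀ : r ≤ r₀) (hn : 0 < n)
    (ha : a ^ 2 * r ≤ r₀ * s) :
    r ^ 2 * a * b ≤ n * r * s / 2 + r₀ ^ 2 * (r * b ^ 2 / n) / 2 := by
  have hr₀ : 0 < r₀ := hr.trans_le hrr₀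
  -- AM-GM in the form `2 r₀ r² a b n ≤ r² a² n² + r₀² r² b²`
  have hamgm : r₀ * (2 * (r ^ 2 * a * b * n)) ≤ r₀ * (r * n ^ 2 * s + r₀ ^ 2 * (r * b ^ 2)) := by
    nlinarith [sq_nonneg (r * a * n - r₀ * r * b),
      mul_le_mul_of_nonneg_left ha (mul_nonneg hr.le (sq_nonneg n)),
      mul_le_mul_of_nonneg_left hrr₀ (mul_nonneg (sq_nonneg r₀) (mul_nonneg hr.le (sq_nonneg b)))]
  have h := le_of_mul_le_mul_left hamgm hr₀
  rw [← sub_nonneg]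
  have e : n * r * s / 2 + r₀ ^ 2 * (r * b ^ 2 / n) / 2 - r ^ 2 * a * b
      = (r * n ^ 2 * s + r₀ ^ 2 * (r * b ^ 2) - 2 * (r ^ 2 * a * b * n)) / (2 * n) := by
    field_simp
  rw [e]
  exact div_nonneg (by linarith) (by linarith)

/-- The paper's weight `𝓕(u) = ∫_{u₀}^u r |D_u φ|² / |∂_u r|`: by the Raychaudhuri equation its
integrand is the logarithmic derivative of `|∂_u r| / Ω²`. -/
def raychaudhuriWeight (ν ω : ℝ → ℝ) (u₀ u : ℝ) : ℝ :=
  Real.log (-ν u / ω u) - Real.log (-ν u₀ / ω u₀)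

section Line

variable {u₀ u₁ : ℝ} {ρ ν ω a b F : ℝ → ℝ}

theorem hasDerivAt_raychaudhuriWeight {x : ℝ} (hνx : ν x < 0) (hωx : 0 < ω x)
    (hray : HasDerivAt (fun t => ν t / ω t) (-(ρ x / ω x) * b x ^ 2) x) :
    HasDerivAt (raychaudhuriWeight ν ω u₀) (ρ x * b x ^ 2 / -ν x) x := by
  have hne : -(ν x / ω x) ≠ 0 := by rw [← neg_div]; exact (div_pos (neg_pos.2 hνx) hωx).ne'
  unfold raychaudhuriWeight
  simp only [neg_div]
  refine ((hray.fun_neg.log hne).sub_const _).congr_deriv ?_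
  have := hνx.ne
  have := hωx.ne'
  field_simp

theorem eq_mul_exp_neg_raychaudhuriWeight {x : ℝ} (hνx : ν x < 0) (hωx : 0 < ω x)
    (hν₀ : ν u₀ < 0) (hω₀ : 0 < ω u₀) :
    ω x = -ν x * (ω u₀ / -ν u₀) * Real.exp (-raychaudhuriWeight ν ω u₀ x) := by
  rw [raychaudhuriWeight, neg_sub, Real.exp_sub, Real.exp_log (div_pos (neg_pos.2 hν₀) hω₀),
    Real.exp_log (div_pos (neg_pos.2 hνx) hωx)]
  have := hνx.ne
  have := hν₀.ne
  field_simp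

theorem sq_mul_le_of_hasDerivAt {y' : ℝ → ℝ} (hρ : ∀ x ∈ Icc u₀ u₁, HasDerivAt ρ (ν x) x)
    (hν : ∀ x ∈ Icc u₀ u₁, ν x < 0) (hρpos : ∀ x ∈ Icc u₀ u₁, 0 < ρ x)
    (hF : ∀ x ∈ Icc u₀ u₁, HasDerivAt F (ρ x * b x ^ 2 / -ν x) x)
    (ha : ∀ x ∈ Icc u₀ u₁, HasDerivAt (fun t => a t ^ 2) (y' x) x)
    (hy' : ∀ x ∈ Icc u₀ u₁, y' x ≤ 2 * a x * b x) {x : ℝ} (hx : x ∈ Icc u₀ u₁) :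
    a x ^ 2 * ρ x ≤ ρ u₀ * (a u₀ ^ 2 + F x - F u₀) := by
  have hcmp := sub_le_sub_of_hasDerivAt_le (f := fun t => a t ^ 2 * ρ t)
    (g := fun t => ρ u₀ * F t) (fun t ht => (ha t ht).mul (hρ t ht))
    (fun t ht => (hF t ht).const_mul _) ?_ hx
  · linarith
  intro t ht
  have ht' := Ico_subset_Icc_self ht
  have hn : 0 < -ν t := neg_pos.2 (hν t ht')
  have hρt := hρpos t ht'
  have hρle : ρ t ≤ ρ u₀ :=
    image_le_left_of_hasDerivAt_nonpos hρ (fun s hs => (hν s (Ico_subset_Icc_self hs)).le) ht'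
  -- `2 a b ρ |ν| ≤ a² ν² + ρ² b²`, and `ρ ≤ ρ u₀`
  have key : (y' t * ρ t + a t ^ 2 * ν t) * -ν t ≤ ρ u₀ * (ρ t * b t ^ 2) := by
    nlinarith [sq_nonneg (a t * ν t + ρ t * b t),
      mul_le_mul_of_nonneg_right (hy' t ht') (mul_nonneg hρt.le hn.le),
      mul_le_mul_of_nonneg_right hρle (mul_nonneg hρt.le (sq_nonneg (b t)))]
  rw [mul_div_assoc', le_div_iff₀ hn]
  exact key

theorem abs_sub_le_sq_mul_of_hasDerivAt {Q q : ℝ → ℝ} (q₀ : ℝ)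
    (hρ : ∀ x ∈ Icc u₀ u₁, HasDerivAt ρ (ν x) x)
    (hν : ∀ x ∈ Icc u₀ u₁, ν x < 0) (hρpos : ∀ x ∈ Icc u₀ u₁, 0 < ρ x)
    (hF : ∀ x ∈ Icc u₀ u₁, HasDerivAt F (ρ x * b x ^ 2 / -ν x) x)
    (hQ : ∀ x ∈ Icc u₀ u₁, HasDerivAt Q (q x) x)
    (hq : ∀ x ∈ Icc u₀ u₁, |q x| ≤ |q₀| * ρ x ^ 2 * a x * b x)
    (ha : ∀ x ∈ Icc u₀ u₁, a x ^ 2 * ρ x ≤ ρ u₀ * (a u₀ ^ 2 + F x - F u₀))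
    {x : ℝ} (hx : x ∈ Icc u₀ u₁) :
    |Q x - Q u₀| ≤ |q₀| * ρ u₀ ^ 2 * (a u₀ ^ 2 + F x - F u₀) := by
  have hρle : ∀ t ∈ Icc u₀ u₁, ρ t ≤ ρ u₀ := fun t ht =>
    image_le_left_of_hasDerivAt_nonpos hρ (fun s hs => (hν s (Ico_subset_Icc_self hs)).le) ht
  have hG : ∀ t ∈ Icc u₀ u₁, 0 ≤ ρ t * b t ^ 2 / -ν t := fun t ht =>
    div_nonneg (mul_nonneg (hρpos t ht).le (sq_nonneg _)) (neg_pos.2 (hν t ht)).le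
  have hFx : F u₀ ≤ F x :=
    left_le_image_of_hasDerivAt_nonneg hF (fun t ht => hG t (Ico_subset_Icc_self ht)) hx
  -- the `(ρ u₀² - ρ²)/4` factor pays for the `ν ρ (a u₀² + F - F u₀)/2` term of the AM-GM bound
  have hB : ∀ t ∈ Icc u₀ u₁, HasDerivAt
      (fun t => |q₀| * ((ρ u₀ ^ 2 - ρ t ^ 2) * (a u₀ ^ 2 + F t - F u₀) / 4 + ρ u₀ ^ 2 * F t / 2))
      (|q₀| * (-ν t * ρ t * (a u₀ ^ 2 + F t - F u₀) / 2
        + (ρ u₀ ^ 2 - ρ t ^ 2) * (ρ t * b t ^ 2 / -ν t) / 4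
        + ρ u₀ ^ 2 * (ρ t * b t ^ 2 / -ν t) / 2)) t := by
    intro t ht
    have := (((((hρ t ht).fun_pow 2).const_sub (ρ u₀ ^ 2)).fun_mul
      (((hF t ht).const_add (a u₀ ^ 2)).sub_const (F u₀))).div_const 4).fun_add
      (((hF t ht).const_mul (ρ u₀ ^ 2)).div_const 2) |>.const_mul |q₀|
    refine this.congr_deriv ?_
    simp only [Nat.cast_ofNat, Nat.add_one_sub_one, pow_one]
    ring
  have hcmp := abs_sub_le_sub_of_abs_hasDerivAt_le hQ hB ?_ hx
  · have hs : F x - F u₀ ≤ a u₀ ^ 2 + F x - F u₀ := by linarith [sq_nonneg (a u₀)]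
    calc |Q x - Q u₀| ≤ _ := hcmp
      _ = |q₀| * ((ρ u₀ ^ 2 - ρ x ^ 2) * (a u₀ ^ 2 + F x - F u₀) / 4
          + ρ u₀ ^ 2 * (F x - F u₀) / 2) := by ring
      _ ≤ |q₀| * (ρ u₀ ^ 2 * (a u₀ ^ 2 + F x - F u₀)) := by
          refine mul_le_mul_of_nonneg_left ?_ (abs_nonneg q₀)
          nlinarith [mul_nonneg (sq_nonneg (ρ x)) (hs.trans' (sub_nonneg.2 hFx)),
            mul_le_mul_of_nonneg_left hs (sq_nonneg (ρ u₀))]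
      _ = _ := by ring
  intro t ht
  have ht' := Ico_subset_Icc_self ht
  have hmain := sq_mul_mul_le_of_sq_mul_le (b := b t) (hρpos t ht') (hρle t ht')
    (neg_pos.2 (hν t ht')) (ha t ht')
  have hextra : 0 ≤ (ρ u₀ ^ 2 - ρ t ^ 2) * (ρ t * b t ^ 2 / -ν t) / 4 :=
    div_nonneg (mul_nonneg (by nlinarith [hρle t ht', hρpos t ht']) (hG t ht')) (by norm_num)
  calc |q t| ≤ |q₀| * (ρ t ^ 2 * a t * b t) := by rw [← mul_assoc, ← mul_assoc]; exact hq t ht'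
    _ ≤ _ := mul_le_mul_of_nonneg_left (by linarith) (abs_nonneg q₀)

theorem abs_sub_le_of_abs_deriv_le_radial {f f' : ℝ → ℝ} {κ K c : ℝ} (hκ : 0 ≤ κ) (hK : 0 ≤ K)
    (hc : 0 ≤ c) (hρ : ∀ x ∈ Icc u₀ u₁, HasDerivAt ρ (ν x) x)
    (hν : ∀ x ∈ Icc u₀ u₁, ν x < 0) (hρpos : ∀ x ∈ Icc u₀ u₁, 0 < ρ x)
    (hf : ∀ x ∈ Icc u₀ u₁, HasDerivAt f (f' x) x)
    (hf' : ∀ x ∈ Ico u₀ u₁, |f' x| ≤ κ * -ν x * (1 + K / ρ x ^ 2 + c * ρ x))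
    {u : ℝ} (hu : u ∈ Icc u₀ u₁) :
    |f u - f u₀| ≤ κ * (ρ u₀ ^ 2 + K + c * ρ u₀ ^ 3 / 2) / ρ u := by
  have hΘ : ∀ x ∈ Icc u₀ u₁, HasDerivAt (fun t => κ * (-ρ t + K * (ρ t)⁻¹ - c * ρ t ^ 2 / 2))
      (κ * -ν x * (1 + K / ρ x ^ 2 + c * ρ x)) x := by
    intro x hx
    have := ((((hρ x hx).neg).add (((hρ x hx).inv (hρpos x hx).ne').const_mul K)).sub
      ((((hρ x hx).fun_pow 2).const_mul c).div_const 2)).const_mul κ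
    refine this.congr_deriv ?_
    have := (hρpos x hx).ne'
    field_simp
    ring
  have hρu := hρpos u hu
  have hρ₀ := hρpos u₀ ⟨le_rfl, hu.1.trans hu.2⟩
  have hρle : ρ u ≤ ρ u₀ :=
    image_le_left_of_hasDerivAt_nonpos hρ (fun t ht => (hν t (Ico_subset_Icc_self ht)).le) hu
  refine (abs_sub_le_sub_of_abs_hasDerivAt_le hf hΘ hf' hu).trans ?_
  rw [le_div_iff₀ hρu]
  have e : (κ * (-ρ u + K * (ρ u)⁻¹ - c * ρ u ^ 2 / 2)
      - κ * (-ρ u₀ + K * (ρ u₀)⁻¹ - c * ρ u₀ ^ 2 / 2)) * ρ u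
      = κ * ((ρ u₀ - ρ u) * ρ u + (K - K * (ρ u / ρ u₀)) + c * ((ρ u₀ ^ 2 - ρ u ^ 2) * ρ u) / 2) := by
    field_simp
    ring
  rw [e]
  refine mul_le_mul_of_nonneg_left ?_ hκ
  have h₁ : (ρ u₀ - ρ u) * ρ u ≤ ρ u₀ ^ 2 := by nlinarith
  have h₂ : 0 ≤ K * (ρ u / ρ u₀) := by positivity
  have h₃ : (ρ u₀ ^ 2 - ρ u ^ 2) * ρ u ≤ ρ u₀ ^ 3 := by nlinarith [pow_pos hρu 3]
  nlinarith [mul_le_mul_of_nonneg_left h₃ hc]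

theorem abs_emkg_source_le_of_line {Q q y' : ℝ → ℝ} (q₀ msq : ℝ) (hmsq : 0 ≤ msq)
    (hρ : ∀ x ∈ Icc u₀ u₁, HasDerivAt ρ (ν x) x)
    (hν : ∀ x ∈ Icc u₀ u₁, ν x < 0) (hρpos : ∀ x ∈ Icc u₀ u₁, 0 < ρ x)
    (hω : ∀ x ∈ Icc u₀ u₁, 0 < ω x)
    (hray : ∀ x ∈ Icc u₀ u₁, HasDerivAt (fun t => ν t / ω t) (-(ρ x / ω x) * b x ^ 2) x)
    (ha : ∀ x ∈ Icc u₀ u₁, HasDerivAt (fun t => a t ^ 2) (y' x) x)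
    (hy' : ∀ x ∈ Icc u₀ u₁, y' x ≤ 2 * a x * b x)
    (hQ : ∀ x ∈ Icc u₀ u₁, HasDerivAt Q (q x) x)
    (hq : ∀ x ∈ Icc u₀ u₁, |q x| ≤ |q₀| * ρ x ^ 2 * a x * b x)
    {x : ℝ} (hx : x ∈ Icc u₀ u₁) :
    |-ω x / 4 + ω x * Q x ^ 2 / (4 * ρ x ^ 2) + msq * ρ x ^ 2 * ω x * a x ^ 2 / 4|
      ≤ ω u₀ / -ν u₀ / 4 * -ν x * (1 + (2 * Q u₀ ^ 2 + 4 * q₀ ^ 2 * ρ u₀ ^ 4 * (a u₀ ^ 4 + 2))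
        / ρ x ^ 2 + msq * (ρ u₀ * (a u₀ ^ 2 + 1)) * ρ x) := by
  have hu₀ : u₀ ∈ Icc u₀ u₁ := ⟨le_rfl, hx.1.trans hx.2⟩
  set F := raychaudhuriWeight ν ω u₀
  have hF : ∀ t ∈ Icc u₀ u₁, HasDerivAt F (ρ t * b t ^ 2 / -ν t) t := fun t ht =>
    hasDerivAt_raychaudhuriWeight (hν t ht) (hω t ht) (hray t ht)
  have hF₀ : F u₀ = 0 := sub_self _
  have hFx : 0 ≤ F x := hF₀ ▸ left_le_image_of_hasDerivAt_nonneg hF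
    (fun t ht => div_nonneg (mul_nonneg (hρpos t (Ico_subset_Icc_self ht)).le (sq_nonneg _))
      (neg_pos.2 (hν t (Ico_subset_Icc_self ht))).le) hx
  have hsc := fun t (ht : t ∈ Icc u₀ u₁) => sq_mul_le_of_hasDerivAt hρ hν hρpos hF ha hy' ht
  have hch := abs_sub_le_sq_mul_of_hasDerivAt q₀ hρ hν hρpos hF hQ hq hsc hx
  simp only [hF₀, sub_zero] at hsc hch
  refine abs_emkg_source_le ?_ (neg_pos.2 (hν x hx)).le
    (div_nonneg (div_pos (hω u₀ hu₀) (neg_pos.2 (hν u₀ hu₀))).le (by norm_num)) (hρpos x hx) hmsq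
    (sq_nonneg _) (Real.exp_pos _).le (Real.exp_le_one_iff.2 (neg_nonpos.2 hFx))
    ((Real.exp_neg_mul_sq_le_of_abs_sub_le hFx hch).trans_eq (by rw [mul_pow, sq_abs]; ring)) ?_
  · rw [eq_mul_exp_neg_raychaudhuriWeight (hν x hx) (hω x hx) (hν u₀ hu₀) (hω u₀ hu₀)]
    ring
  · calc Real.exp (-F x) * (a x ^ 2 * ρ x) ≤ Real.exp (-F x) * (ρ u₀ * (a u₀ ^ 2 + F x)) :=
          mul_le_mul_of_nonneg_left (hsc x hx) (Real.exp_pos _).le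
      _ = ρ u₀ * (Real.exp (-F x) * (a u₀ ^ 2 + F x)) := by ring
      _ ≤ ρ u₀ * (a u₀ ^ 2 + 1) := mul_le_mul_of_nonneg_left
        (Real.exp_neg_mul_add_le hFx (sq_nonneg _)) (hρpos u₀ hu₀).le

theorem abs_sub_le_of_emkg_line {Q q f y' : ℝ → ℝ} (q₀ msq : ℝ) (hmsq : 0 ≤ msq)
    (hρ : ∀ x ∈ Icc u₀ u₁, HasDerivAt ρ (ν x) x)
    (hν : ∀ x ∈ Icc u₀ u₁, ν x < 0) (hρpos : ∀ x ∈ Icc u₀ u₁, 0 < ρ x)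
    (hω : ∀ x ∈ Icc u₀ u₁, 0 < ω x)
    (hray : ∀ x ∈ Icc u₀ u₁, HasDerivAt (fun t => ν t / ω t) (-(ρ x / ω x) * b x ^ 2) x)
    (ha : ∀ x ∈ Icc u₀ u₁, HasDerivAt (fun t => a t ^ 2) (y' x) x)
    (hy' : ∀ x ∈ Icc u₀ u₁, y' x ≤ 2 * a x * b x)
    (hQ : ∀ x ∈ Icc u₀ u₁, HasDerivAt Q (q x) x)
    (hq : ∀ x ∈ Icc u₀ u₁, |q x| ≤ |q₀| * ρ x ^ 2 * a x * b x)
    (hf : ∀ x ∈ Icc u₀ u₁, HasDerivAt f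
      (-ω x / 4 + ω x * Q x ^ 2 / (4 * ρ x ^ 2) + msq * ρ x ^ 2 * ω x * a x ^ 2 / 4) x)
    {u : ℝ} (hu : u ∈ Icc u₀ u₁) :
    |f u - f u₀| ≤ 4 * (ρ u₀ / ρ u) * (ω u₀ / -(ρ u₀ * ν u₀)) *
      (ρ u₀ ^ 2 + Q u₀ ^ 2 + q₀ ^ 2 * ρ u₀ ^ 4 * (1 + a u₀ ^ 4)
        + msq * ρ u₀ ^ 4 * (1 + a u₀ ^ 2)) := by
  have hu₀ : u₀ ∈ Icc u₀ u₁ := ⟨le_rfl, hu.1.trans hu.2⟩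
  have hρ₀ := hρpos u₀ hu₀
  have hκ : 0 < ω u₀ / -ν u₀ / 4 :=
    div_pos (div_pos (hω u₀ hu₀) (neg_pos.2 (hν u₀ hu₀))) (by norm_num)
  refine (abs_sub_le_of_abs_deriv_le_radial hκ.le (by positivity) (mul_nonneg hmsq (by positivity))
    hρ hν hρpos hf (fun x hx => abs_emkg_source_le_of_line q₀ msq hmsq hρ hν hρpos hω hray ha hy'
      hQ hq (Ico_subset_Icc_self hx)) hu).trans ?_
  have hconst : ρ u₀ ^ 2 + (2 * Q u₀ ^ 2 + 4 * q₀ ^ 2 * ρ u₀ ^ 4 * (a u₀ ^ 4 + 2))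
      + msq * (ρ u₀ * (a u₀ ^ 2 + 1)) * ρ u₀ ^ 3 / 2
      ≤ 16 * (ρ u₀ ^ 2 + Q u₀ ^ 2 + q₀ ^ 2 * ρ u₀ ^ 4 * (1 + a u₀ ^ 4)
        + msq * ρ u₀ ^ 4 * (1 + a u₀ ^ 2)) := by
    rw [← sub_nonneg]
    have e : 16 * (ρ u₀ ^ 2 + Q u₀ ^ 2 + q₀ ^ 2 * ρ u₀ ^ 4 * (1 + a u₀ ^ 4)
          + msq * ρ u₀ ^ 4 * (1 + a u₀ ^ 2))
        - (ρ u₀ ^ 2 + (2 * Q u₀ ^ 2 + 4 * q₀ ^ 2 * ρ u₀ ^ 4 * (a u₀ ^ 4 + 2))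
          + msq * (ρ u₀ * (a u₀ ^ 2 + 1)) * ρ u₀ ^ 3 / 2)
        = 15 * ρ u₀ ^ 2 + 14 * Q u₀ ^ 2 + q₀ ^ 2 * ρ u₀ ^ 4 * (8 + 12 * a u₀ ^ 4)
          + 31 / 2 * msq * ρ u₀ ^ 4 * (1 + a u₀ ^ 2) := by ring
    rw [e]
    positivity
  calc _ ≤ ω u₀ / -ν u₀ / 4 * (16 * (ρ u₀ ^ 2 + Q u₀ ^ 2 + q₀ ^ 2 * ρ u₀ ^ 4 * (1 + a u₀ ^ 4)
        + msq * ρ u₀ ^ 4 * (1 + a u₀ ^ 2))) / ρ u :=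
        div_le_div_of_nonneg_right (mul_le_mul_of_nonneg_left hconst hκ.le) (hρpos u hu).le
    _ = _ := by
      have := (hν u₀ hu₀).ne
      have := (hρpos u hu).ne'
      field_simp
      ring

end Line

theorem hasDerivAt_comp_mk_left {E : Type*} [NormedAddCommGroup E] [NormedSpace ℝ E]
    {f : ℝ × ℝ → E} {u v : ℝ} (hf : DifferentiableAt ℝ f (u, v)) :
    HasDerivAt (fun t => f (t, v)) (fderiv ℝ f (u, v) (1, 0)) u := by
  have hline : HasDerivAt (fun t : ℝ => (t, v)) ((1 : ℝ), (0 : ℝ)) u :=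
    (hasDerivAt_id u).prodMk (hasDerivAt_const u v)
  exact hf.hasFDerivAt.comp_hasDerivAt u hline

theorem contDiff_pdu {n : ℕ} {f : ℝ × ℝ → ℝ} (hf : ContDiff ℝ (n + 1) f) : ContDiff ℝ n (pdu f) :=
  (hf.fderiv_right le_rfl).clm_apply contDiff_const

theorem contDiff_pdv {n : ℕ} {f : ℝ × ℝ → ℝ} (hf : ContDiff ℝ (n + 1) f) : ContDiff ℝ n (pdv f) :=
  (hf.fderiv_right le_rfl).clm_apply contDiff_const

namespace Sol

variable {q0 msq : ℝ} {R : Set (ℝ × ℝ)} (S : Sol q0 msq R)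

theorem hasDerivAt_r (u v : ℝ) : HasDerivAt (fun t => S.r (t, v)) (pdu S.r (u, v)) u :=
  hasDerivAt_comp_mk_left (S.smooth_r.differentiable (by norm_num) _)

theorem hasDerivAt_raychaudhuri {u v : ℝ} (h : (u, v) ∈ R) :
    HasDerivAt (fun t => pdu S.r (t, v) / S.Om2 (t, v))
      (-(S.r (u, v) / S.Om2 (u, v)) * ‖S.DuPhi (u, v)‖ ^ 2) u := by
  have hν : DifferentiableAt ℝ (pdu S.r) (u, v) :=
    (contDiff_pdu (n := 2) S.smooth_r).differentiable (by norm_num) _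
  have hω : DifferentiableAt ℝ S.Om2 (u, v) := S.smooth_Om2.differentiable (by norm_num) _
  have hdiff : DifferentiableAt ℝ (fun q => pdu S.r q / S.Om2 q) (u, v) := by
    fun_prop (disch := exact (S.Om2_pos _ h).ne')
  have := hasDerivAt_comp_mk_left hdiff
  rwa [← pdu, S.eq_Ray_u _ h, ← Complex.sq_norm] at this

theorem hasDerivAt_norm_phi_sq (u v : ℝ) :
    HasDerivAt (fun t => ‖S.phi (t, v)‖ ^ 2) (2 * inner ℝ (S.phi (u, v)) (S.DuPhi (u, v))) u := by
  have := (hasDerivAt_comp_mk_left (S.smooth_phi.differentiable (by norm_num) (u, v))).norm_sq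
  convert this using 2
  -- the gauge term `i q₀ A_u φ` is orthogonal to `φ`
  simp only [Sol.DuPhi, inner_add_right, Complex.inner, pduC]
  simp only [Complex.mul_re, Complex.conj_re, Complex.conj_im, mul_neg, sub_neg_eq_add,
    Complex.I_re, Complex.ofReal_re, zero_mul, Complex.I_im, Complex.ofReal_im, mul_zero, sub_self,
    Complex.mul_im, one_mul, zero_add, zero_sub, neg_mul, add_eq_left]
  ring

theorem hasDerivAt_Qe {u v : ℝ} (h : (u, v) ∈ R) :
    HasDerivAt (fun t => S.Qe (t, v))
      (-q0 * S.r (u, v) ^ 2 * (S.phi (u, v) * (starRingEnd ℂ) (S.DuPhi (u, v))).im) u := by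
  have := hasDerivAt_comp_mk_left (S.smooth_Qe.differentiable (by norm_num) (u, v))
  rwa [← pdu, S.eq_Qu _ h] at this

theorem abs_charge_flux_le (p : ℝ × ℝ) :
    |-q0 * S.r p ^ 2 * (S.phi p * (starRingEnd ℂ) (S.DuPhi p)).im|
      ≤ |q0| * S.r p ^ 2 * ‖S.phi p‖ * ‖S.DuPhi p‖ := by
  have h := (Complex.abs_im_le_norm (S.phi p * (starRingEnd ℂ) (S.DuPhi p))).trans_eq
    (by rw [norm_mul, Complex.norm_conj])
  rw [abs_mul, abs_mul, abs_neg, abs_pow, sq_abs, mul_assoc _ ‖S.phi p‖]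
  exact mul_le_mul_of_nonneg_left h (by positivity)

theorem hasDerivAt_r_mul_pdv_r {u v : ℝ} (h : (u, v) ∈ R) :
    HasDerivAt (fun t => S.r (t, v) * pdv S.r (t, v))
      (-S.Om2 (u, v) / 4 + S.Om2 (u, v) * S.Qe (u, v) ^ 2 / (4 * S.r (u, v) ^ 2)
        + msq * S.r (u, v) ^ 2 * S.Om2 (u, v) * ‖S.phi (u, v)‖ ^ 2 / 4) u := by
  have hpdv := hasDerivAt_comp_mk_left
    ((contDiff_pdv (n := 2) S.smooth_r).differentiable (by norm_num) (u, v))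
  have := (S.hasDerivAt_r u v).mul hpdv
  rw [← pdu, S.eq_r _ h] at this
  refine this.congr_deriv ?_
  have := (S.r_pos _ h).ne'
  rw [Complex.sq_norm]
  field_simp
  ring

end Sol

/-- a priori control of the outgoing radial derivative — the trapping
estimate: there is a numerical constant `C > 0` such that for any solution of the EMKG
system on `[u₀,u₁] × J` with `r > 0` and `∂_u r < 0`, the quantity `-r∂_v r` along each
line of constant `v` is controlled purely by the data at `u = u₀`. -/
theorem statement15 :
    ∃ C : ℝ, 0 < C ∧
      ∀ (q0 msq u0 u1 : ℝ) (J : Set ℝ), q0 ≠ 0 → 0 ≤ msq → u0 ≤ u1 → J.OrdConnected →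
        ∀ S : Sol q0 msq (Set.Icc u0 u1 ×ˢ J),
          (∀ p ∈ Set.Icc u0 u1 ×ˢ J, pdu S.r p < 0) →
            ∀ u ∈ Set.Icc u0 u1, ∀ v ∈ J,
              |(-(S.r (u, v) * pdv S.r (u, v))) + S.r (u0, v) * pdv S.r (u0, v)| ≤
                C * (S.r (u0, v) / S.r (u, v)) *
                  (S.Om2 (u0, v) / (-(S.r (u0, v) * pdu S.r (u0, v)))) *
                  (S.r (u0, v) ^ 2 + S.Qe (u0, v) ^ 2 +
                    q0 ^ 2 * S.r (u0, v) ^ 4 * (1 + ‖S.phi (u0, v)‖ ^ 4) +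
                    msq * S.r (u0, v) ^ 4 * (1 + ‖S.phi (u0, v)‖ ^ 2)) := by
  refine ⟨4, by norm_num, fun q0 msq u0 u1 J _ hmsq _ _ S hν u hu v hv => ?_⟩
  have hR : ∀ x ∈ Icc u0 u1, (x, v) ∈ Icc u0 u1 ×ˢ J := fun x hx => mk_mem_prod hx hv
  have key := abs_sub_le_of_emkg_line (ρ := fun t => S.r (t, v)) (ν := fun t => pdu S.r (t, v))
    (ω := fun t => S.Om2 (t, v)) (a := fun t => ‖S.phi (t, v)‖) (b := fun t => ‖S.DuPhi (t, v)‖)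
    (f := fun t => S.r (t, v) * pdv S.r (t, v)) q0 msq hmsq
    (fun x _ => S.hasDerivAt_r x v) (fun x hx => hν _ (hR x hx))
    (fun x hx => S.r_pos _ (hR x hx)) (fun x hx => S.Om2_pos _ (hR x hx))
    (fun x hx => S.hasDerivAt_raychaudhuri (hR x hx)) (fun x _ => S.hasDerivAt_norm_phi_sq x v)
    (fun x _ => by linarith [real_inner_le_norm (S.phi (x, v)) (S.DuPhi (x, v))])
    (fun x hx => S.hasDerivAt_Qe (hR x hx)) (fun x _ => S.abs_charge_flux_le (x, v))
    (fun x hx => S.hasDerivAt_r_mul_pdv_r (hR x hx)) hu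
  rw [neg_add_eq_sub, abs_sub_comm]
  exact key

end
end

section
/- Calculus lemma with area-radius weights: let 1 < s ≤ p < 2s, D₋, D₊ > 0, v₀ ≥ 1, u₀ < 0, and let r : [u₀,0]×[v₀,∞) → (0,∞) satisfy, for all u₀ ≤ u ≤ 0 and v ≥ v₀: 2|u| + (2D₋/(2s−1))·v^{1−2s} ≤ r(u,v)² ≤ 2|u| + (2D₊/(2s−1))·v^{1−2s}. Then there is a constant C depending only on (s, p, D₋, D₊) such that for all such (u,v): ∫_{v₀}^{v} (v′)^{−p}/r(u,v′)² dv′ ≤ C·r(u,v)^{(p−2s)/(s−1/2)}. If moreover s ≤ p < s + 1/2, then also ∫_{v₀}^{v} (v′)^{−p}/r(u,v′) dv′ ≤ C·r(u,v)^{−(1−2p+2s)/(2s−1)}. -/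
/-!
Split the `v`-integral at the transition time `V`, defined by `cp V^{1-2s} = r(u,v)²/2`
(so `V ≈ |u|^{-1/(2s-1)}`). Below `V` the lower bound `r² ≥ cm w^{1-2s}` makes the integrand
`w^{-p} / r^k` at most a multiple of `w^{k(s-1/2)-p}`, integrable at `0` because
`p < k(s-1/2) + 1`. Above `V` the upper bound at `v` forces `2|u| ≥ r(u,v)²/2`, hence
`r(u,w)² ≥ r(u,v)²/2`, and the integrand is at most a multiple of `r(u,v)^{-k} w^{-p}`,
integrable at `∞` because `p > 1`. Both pieces are multiples of `V^{k(s-1/2)-p+1}`, which is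
a power of `r(u,v)`; the two claims are the cases `k = 2` and `k = 1`.
-/

open Real Set MeasureTheory intervalIntegral

theorem integral_rpow_le_of_le {q a b V : ℝ} (hq : -1 < q) (ha : 0 ≤ a) (hab : a ≤ b)
    (hbV : b ≤ V) : ∫ w in a..b, w ^ q ≤ V ^ (q + 1) / (q + 1) := by
  rw [integral_rpow (Or.inl hq)]
  have hb : b ^ (q + 1) ≤ V ^ (q + 1) := rpow_le_rpow (ha.trans hab) hbV (by linarith)
  have ha' : 0 ≤ a ^ (q + 1) := rpow_nonneg ha _
  exact div_le_div_of_nonneg_right (by linarith) (by linarith)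

theorem integral_rpow_neg_le_of_le {p a b V : ℝ} (hp : 1 < p) (hV : 0 < V) (hVa : V ≤ a)
    (hab : a ≤ b) : ∫ w in a..b, w ^ (-p) ≤ V ^ (1 - p) / (p - 1) := by
  have h0 : (0 : ℝ) ∉ uIcc a b := notMem_uIcc_of_lt (hV.trans_le hVa) (by linarith)
  have hflip : (b ^ (1 - p) - a ^ (1 - p)) / (1 - p) =
      (a ^ (1 - p) - b ^ (1 - p)) / (p - 1) := by
    rw [div_eq_div_iff (by linarith) (by linarith)]; ring
  rw [integral_rpow (Or.inr ⟨by linarith, h0⟩), show -p + 1 = 1 - p by ring, hflip]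
  have ha : a ^ (1 - p) ≤ V ^ (1 - p) := rpow_le_rpow_of_nonpos hV hVa (by linarith)
  have hb : 0 ≤ b ^ (1 - p) := rpow_nonneg (hV.le.trans (hVa.trans hab)) _
  exact div_le_div_of_nonneg_right (by linarith) (by linarith)

theorem integral_le_of_le_rpow_of_le_rpow_neg {f : ℝ → ℝ} {p q A B a b V : ℝ} (hq : -1 < q)
    (hp : 1 < p) (hA : 0 ≤ A) (hB : 0 ≤ B) (ha : 0 < a) (hab : a ≤ b) (hV : 0 < V)
    (hf : IntervalIntegrable f volume a b)
    (hfq : ∀ w ∈ Icc a b, f w ≤ A * w ^ q)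
    (hfp : ∀ w ∈ Icc a b, V ≤ w → f w ≤ B * w ^ (-p)) :
    ∫ w in a..b, f w ≤ A * (V ^ (q + 1) / (q + 1)) + B * (V ^ (1 - p) / (p - 1)) := by
  have hf' : ∀ c d, c ∈ Icc a b → d ∈ Icc a b → IntervalIntegrable f volume c d :=
    fun c d hc hd ↦ hf.mono_set (uIcc_subset_uIcc (Icc_subset_uIcc hc) (Icc_subset_uIcc hd))
  have head : ∀ c ∈ Icc a b, c ≤ V →
      ∫ w in a..c, f w ≤ A * (V ^ (q + 1) / (q + 1)) := by
    intro c hc hcV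
    calc ∫ w in a..c, f w ≤ ∫ w in a..c, A * w ^ q :=
          integral_mono_on hc.1 (hf' a c ⟨le_rfl, hab⟩ hc)
            ((intervalIntegrable_rpow' hq).const_mul A)
            (fun w hw ↦ hfq w ⟨hw.1, hw.2.trans hc.2⟩)
      _ = A * ∫ w in a..c, w ^ q := integral_const_mul A _
      _ ≤ _ := mul_le_mul_of_nonneg_left (integral_rpow_le_of_le hq ha.le hc.1 hcV) hA
  have tail : ∀ c ∈ Icc a b, V ≤ c →
      ∫ w in c..b, f w ≤ B * (V ^ (1 - p) / (p - 1)) := by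
    intro c hc hVc
    have h0 : (0 : ℝ) ∉ uIcc c b := notMem_uIcc_of_lt (hV.trans_le hVc) (by linarith [hc.2])
    calc ∫ w in c..b, f w ≤ ∫ w in c..b, B * w ^ (-p) :=
          integral_mono_on hc.2 (hf' c b hc ⟨hab, le_rfl⟩)
            ((intervalIntegrable_rpow (Or.inr h0)).const_mul B)
            (fun w hw ↦ hfp w ⟨hc.1.trans hw.1, hw.2⟩ (hVc.trans hw.1))
      _ = B * ∫ w in c..b, w ^ (-p) := integral_const_mul B _
      _ ≤ _ := mul_le_mul_of_nonneg_left (integral_rpow_neg_le_of_le hp hV hVc hc.2) hB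
  have hhead : 0 ≤ A * (V ^ (q + 1) / (q + 1)) :=
    mul_nonneg hA (div_nonneg (rpow_nonneg hV.le _) (by linarith))
  have htail : 0 ≤ B * (V ^ (1 - p) / (p - 1)) :=
    mul_nonneg hB (div_nonneg (rpow_nonneg hV.le _) (by linarith))
  rcases le_total V a with hVa | haV
  · linarith [tail a ⟨le_rfl, hab⟩ hVa]
  rcases le_total b V with hbV | hVb
  · linarith [head b ⟨hab, le_rfl⟩ hbV]
  have hVab : V ∈ Icc a b := ⟨haV, hVb⟩
  rw [← integral_add_adjacent_intervals (hf' a V ⟨le_rfl, hab⟩ hVab)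
    (hf' V b hVab ⟨hab, le_rfl⟩)]
  exact add_le_add (head V hVab le_rfl) (tail V hVab le_rfl)

theorem div_rpow_le_mul_rpow_of_le_sq {x y c k : ℝ} (hx : 0 ≤ x) (hy : 0 < y)
    (hyx : y ≤ x ^ 2) (hc : 0 ≤ c) (hk : 0 ≤ k) : c / x ^ k ≤ c * y ^ (-k / 2) := by
  have hxk : x ^ k = (x ^ 2) ^ (k / 2) := by
    rw [← rpow_natCast, ← rpow_mul hx, Nat.cast_ofNat, mul_div_cancel₀ k two_ne_zero]
  rw [hxk, neg_div, rpow_neg hy.le, ← div_eq_mul_inv]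
  exact div_le_div_of_nonneg_left hc (rpow_pos_of_pos hy _)
    (rpow_le_rpow hy.le hyx (by linarith))

theorem integral_rpow_div_rpow_le {ρ : ℝ → ℝ} {s p k cm cp v0 v V : ℝ} (hp : 1 < p)
    (hk : 0 ≤ k) (hpk : 0 < k * (s - 1 / 2) - p + 1) (hcm : 0 < cm) (hcp : 0 < cp)
    (hv0 : 0 < v0) (hv : v0 ≤ v) (hV : 0 < V) (hρ : ContinuousOn ρ (Icc v0 v))
    (hpos : ∀ w ∈ Icc v0 v, 0 < ρ w)
    (hnear : ∀ w ∈ Icc v0 v, cm * w ^ (1 - 2 * s) ≤ ρ w ^ 2)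
    (hfar : ∀ w ∈ Icc v0 v, V ≤ w → cp * V ^ (1 - 2 * s) ≤ ρ w ^ 2) :
    ∫ w in v0..v, w ^ (-p) / ρ w ^ k ≤
      (cm ^ (-k / 2) / (k * (s - 1 / 2) - p + 1) + cp ^ (-k / 2) / (p - 1)) *
        V ^ (k * (s - 1 / 2) - p + 1) := by
  have hw0 : ∀ w ∈ Icc v0 v, 0 < w := fun w hw ↦ hv0.trans_le hw.1
  have hint : IntervalIntegrable (fun w ↦ w ^ (-p) / ρ w ^ k) volume v0 v := by
    refine ContinuousOn.intervalIntegrable_of_Icc hv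
      (ContinuousOn.div (continuousOn_id.rpow_const fun w hw ↦ Or.inl (hw0 w hw).ne')
        (hρ.rpow_const fun w hw ↦ Or.inl (hpos w hw).ne') fun w hw ↦ ?_)
    exact (rpow_pos_of_pos (hpos w hw) k).ne'
  have hnear' : ∀ w ∈ Icc v0 v,
      w ^ (-p) / ρ w ^ k ≤ cm ^ (-k / 2) * w ^ (k * (s - 1 / 2) - p) := by
    intro w hw
    have hw' := hw0 w hw
    calc w ^ (-p) / ρ w ^ k ≤ w ^ (-p) * (cm * w ^ (1 - 2 * s)) ^ (-k / 2) :=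
          div_rpow_le_mul_rpow_of_le_sq (hpos w hw).le (mul_pos hcm (rpow_pos_of_pos hw' _))
            (hnear w hw) (rpow_nonneg hw'.le _) hk
      _ = cm ^ (-k / 2) * w ^ (k * (s - 1 / 2) - p) := by
        rw [mul_rpow hcm.le (rpow_nonneg hw'.le _), ← rpow_mul hw'.le, mul_left_comm,
          ← rpow_add hw', show -p + (1 - 2 * s) * (-k / 2) = k * (s - 1 / 2) - p by ring]
  have hfar' : ∀ w ∈ Icc v0 v, V ≤ w →
      w ^ (-p) / ρ w ^ k ≤ (cp ^ (-k / 2) * V ^ (k * (s - 1 / 2))) * w ^ (-p) := by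
    intro w hw hVw
    calc w ^ (-p) / ρ w ^ k ≤ w ^ (-p) * (cp * V ^ (1 - 2 * s)) ^ (-k / 2) :=
          div_rpow_le_mul_rpow_of_le_sq (hpos w hw).le (mul_pos hcp (rpow_pos_of_pos hV _))
            (hfar w hw hVw) (rpow_nonneg (hw0 w hw).le _) hk
      _ = (cp ^ (-k / 2) * V ^ (k * (s - 1 / 2))) * w ^ (-p) := by
        rw [mul_rpow hcp.le (rpow_nonneg hV.le _), ← rpow_mul hV.le,
          show (1 - 2 * s) * (-k / 2) = k * (s - 1 / 2) by ring, mul_comm]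
  refine (integral_le_of_le_rpow_of_le_rpow_neg (by linarith) hp (rpow_nonneg hcm.le _)
    (mul_nonneg (rpow_nonneg hcp.le _) (rpow_nonneg hV.le _)) hv0 hv hV hint hnear'
    hfar').trans_eq ?_
  rw [show k * (s - 1 / 2) - p + 1 = k * (s - 1 / 2) + (1 - p) by ring, rpow_add hV]
  ring

noncomputable def radiusWeightConst (s p k cm cp : ℝ) : ℝ :=
  (cm ^ (-k / 2) / (k * (s - 1 / 2) - p + 1) + cp ^ (-k / 2) / (p - 1)) *
    (2 * cp) ^ (-((k * (s - 1 / 2) - p + 1) / (1 - 2 * s)))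

theorem integral_rpow_div_rpow_le_radiusWeightConst_mul {ρ : ℝ → ℝ}
    {s p k cm cp a v0 v : ℝ} (hs : 1 / 2 < s) (hp : 1 < p) (hk : 0 ≤ k)
    (hpk : 0 < k * (s - 1 / 2) - p + 1) (hcm : 0 < cm) (hcp : 0 < cp) (ha : 0 ≤ a)
    (hv0 : 0 < v0) (hv : v0 ≤ v) (hρ : ContinuousOn ρ (Icc v0 v))
    (hpos : ∀ w ∈ Icc v0 v, 0 < ρ w)
    (hlow : ∀ w ∈ Icc v0 v, a + cm * w ^ (1 - 2 * s) ≤ ρ w ^ 2)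
    (hup : ρ v ^ 2 ≤ a + cp * v ^ (1 - 2 * s)) :
    ∫ w in v0..v, w ^ (-p) / ρ w ^ k ≤
      radiusWeightConst s p k cm cp * ρ v ^ (2 * ((k * (s - 1 / 2) - p + 1) / (1 - 2 * s))) := by
  set R := ρ v
  set β := (k * (s - 1 / 2) - p + 1) / (1 - 2 * s)
  have hR : 0 < R := hpos v ⟨hv, le_rfl⟩
  have hRcp : 0 < R ^ 2 / (2 * cp) := by positivity
  set V := (R ^ 2 / (2 * cp)) ^ (1 - 2 * s)⁻¹
  have hV : 0 < V := rpow_pos_of_pos hRcp _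
  have hVs : cp * V ^ (1 - 2 * s) = R ^ 2 / 2 := by
    rw [rpow_inv_rpow hRcp.le (by linarith)]
    field_simp
  have hnear : ∀ w ∈ Icc v0 v, cm * w ^ (1 - 2 * s) ≤ ρ w ^ 2 :=
    fun w hw ↦ by linarith [hlow w hw]
  have hfar : ∀ w ∈ Icc v0 v, V ≤ w → cp * V ^ (1 - 2 * s) ≤ ρ w ^ 2 := by
    intro w hw hVw
    have hdecay : cp * v ^ (1 - 2 * s) ≤ cp * V ^ (1 - 2 * s) :=
      mul_le_mul_of_nonneg_left (rpow_le_rpow_of_nonpos hV (hVw.trans hw.2) (by linarith)) hcp.le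
    have hcmw : 0 ≤ cm * w ^ (1 - 2 * s) := mul_nonneg hcm.le (rpow_nonneg (hv0.le.trans hw.1) _)
    linarith [hlow w hw]
  have hVpow : V ^ (k * (s - 1 / 2) - p + 1) = (2 * cp) ^ (-β) * R ^ (2 * β) := by
    rw [← rpow_mul hRcp.le, inv_mul_eq_div, div_rpow (sq_nonneg R) (by positivity),
      ← rpow_natCast, ← rpow_mul hR.le, rpow_neg (by positivity), Nat.cast_ofNat]
    ring
  calc ∫ w in v0..v, w ^ (-p) / ρ w ^ k
      ≤ (cm ^ (-k / 2) / (k * (s - 1 / 2) - p + 1) + cp ^ (-k / 2) / (p - 1)) *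
          V ^ (k * (s - 1 / 2) - p + 1) :=
        integral_rpow_div_rpow_le hp hk hpk hcm hcp hv0 hv hV hρ hpos hnear hfar
    _ = radiusWeightConst s p k cm cp * R ^ (2 * β) := by
        rw [hVpow, radiusWeightConst]
        ring

/-- calculus lemma with area-radius weights: if
`2|u| + (2D₋/(2s-1))·v^{1-2s} ≤ r(u,v)² ≤ 2|u| + (2D₊/(2s-1))·v^{1-2s}` with
`1 < s ≤ p < 2s`, then `∫_{v₀}^{v} (v')^{-p}/r(u,v')² dv' ≲ r(u,v)^{(p-2s)/(s-1/2)}`,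
and if moreover `p < s + 1/2` then
`∫_{v₀}^{v} (v')^{-p}/r(u,v') dv' ≲ r(u,v)^{-(1-2p+2s)/(2s-1)}`; the constant depends
only on `(s,p,D₋,D₊)`. -/
theorem statement16 (s p Dm Dp : ℝ) (hs : 1 < s) (hsp : s ≤ p) (hp2s : p < 2 * s)
    (hDm : 0 < Dm) (hDp : 0 < Dp) :
    ∃ C : ℝ, 0 < C ∧
      ∀ (v0 u0 : ℝ), 1 ≤ v0 → u0 < 0 →
        ∀ r : ℝ × ℝ → ℝ, Continuous r →
          (∀ u v : ℝ, u0 ≤ u → u ≤ 0 → v0 ≤ v →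
            0 < r (u, v) ∧
            2 * |u| + 2 * Dm / (2 * s - 1) * v ^ (1 - 2 * s) ≤ r (u, v) ^ 2 ∧
            r (u, v) ^ 2 ≤ 2 * |u| + 2 * Dp / (2 * s - 1) * v ^ (1 - 2 * s)) →
            ∀ u v : ℝ, u0 ≤ u → u ≤ 0 → v0 ≤ v →
              (∫ w in v0..v, w ^ (-p) / r (u, w) ^ 2) ≤
                C * r (u, v) ^ ((p - 2 * s) / (s - 1 / 2)) ∧
              (p < s + 1 / 2 →
                (∫ w in v0..v, w ^ (-p) / r (u, w)) ≤
                  C * r (u, v) ^ (-((1 - 2 * p + 2 * s) / (2 * s - 1)))) := by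
  have hs' : 1 / 2 < s := by linarith
  have hcm : 0 < 2 * Dm / (2 * s - 1) := div_pos (by linarith) (by linarith)
  have hcp : 0 < 2 * Dp / (2 * s - 1) := div_pos (by linarith) (by linarith)
  set K := fun k ↦ radiusWeightConst s p k (2 * Dm / (2 * s - 1)) (2 * Dp / (2 * s - 1))
  refine ⟨max 1 (max (K 2) (K 1)), lt_max_of_lt_left one_pos, ?_⟩
  intro v0 u0 hv0 _ r hr hyp u v hu0u hu hv
  have hR : 0 < r (u, v) := (hyp u v hu0u hu hv).1
  have hbound (k : ℝ) (hk : 0 ≤ k) (hpk : 0 < k * (s - 1 / 2) - p + 1) :=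
    integral_rpow_div_rpow_le_radiusWeightConst_mul (ρ := fun w ↦ r (u, w)) hs' (by linarith) hk
      hpk hcm hcp (by positivity) (by linarith) hv (hr.comp (.prodMk_right u)).continuousOn
      (fun w hw ↦ (hyp u w hu0u hu hw.1).1) (fun w hw ↦ (hyp u w hu0u hu hw.1).2.1)
      (hyp u v hu0u hu hv).2.2
  have h1 : 1 - 2 * s ≠ 0 := by linarith
  have h2 : s - 1 / 2 ≠ 0 := by linarith
  have h3 : 2 * s - 1 ≠ 0 := by linarith
  constructor
  · have h := hbound 2 zero_le_two (by linarith)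
    simp only [rpow_two] at h
    rw [show 2 * ((2 * (s - 1 / 2) - p + 1) / (1 - 2 * s)) = (p - 2 * s) / (s - 1 / 2) by
      field_simp; ring] at h
    exact h.trans (mul_le_mul_of_nonneg_right (le_max_of_le_right (le_max_left _ _))
      (rpow_nonneg hR.le _))
  · intro hps
    have h := hbound 1 zero_le_one (by linarith)
    simp only [rpow_one] at h
    rw [show 2 * ((1 * (s - 1 / 2) - p + 1) / (1 - 2 * s)) =
        -((1 - 2 * p + 2 * s) / (2 * s - 1)) by field_simp; ring] at h
    exact h.trans (mul_le_mul_of_nonneg_right (le_max_of_le_right (le_max_right _ _))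
      (rpow_nonneg hR.le _))
end
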